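/- arXiv:1110.2605 — 7 statements merged into one kernel-verified Lean document; each statement's English description precedes it below -/
import Mathlib

section
/- Let e,x∈ℝ² with ‖x−e‖₂=ℓ, x₁≤0≤e₁, x₂≤0≤e₂, and a_{i1}≠x₁, a_{i1}≠e₁ for all i=1,…,M. Let λ>0 and set x'=x+(−λ,0), e'=e+(−λ,0), x''=x+(λ,0), e''=e+(λ,0), and assume the admissibility conditions: CR_{e',x'}∖∂CR_{e,x} = CR_{e,x}∖∂CR_{e,x} = CR_{e'',x''}∖∂CR_{e,x}; C_x^i(A)=C_{x'}^i(A)=C_{x''}^i(A) for i=1,…,4; and for every i, a_{i1}<e₁ implies a_{i1}<e₁−λ and a_{i1}>e₁ implies a_{i1}>e₁+λ. Then f(e',x') ≤ f(e,x) or f(e'',x'') ≤ f(e,x). -/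
open Real Finset
open scoped Classical

/-- The ℓ₁ (rectilinear) norm on ℝ². -/
noncomputable def l1 (p : ℝ × ℝ) : ℝ := |p.1| + |p.2|

/-- Objective function: f(e,x) = Σ ωᵢ · min(‖x−aᵢ‖₁, ‖e−aᵢ‖₁ + ℓ/k). -/
noncomputable def fObj {M : ℕ} (a : Fin M → ℝ × ℝ) (ω : Fin M → ℝ) (ℓ k : ℝ)
    (e x : ℝ × ℝ) : ℝ :=
  ∑ i, ω i * min (l1 (x - a i)) (l1 (e - a i) + ℓ / k)

/-- Captation region (as a set of indices of demand points). -/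
noncomputable def CR {M : ℕ} (a : Fin M → ℝ × ℝ) (ℓ k : ℝ) (e x : ℝ × ℝ) :
    Finset (Fin M) :=
  univ.filter fun i => l1 (e - a i) + ℓ / k ≤ l1 (x - a i)

/-- Boundary of the captation region. -/
noncomputable def bCR {M : ℕ} (a : Fin M → ℝ × ℝ) (ℓ k : ℝ) (e x : ℝ × ℝ) :
    Finset (Fin M) :=
  univ.filter fun i => l1 (x - a i) = l1 (e - a i) + ℓ / k

/-- Relative interior of the captation region. -/
noncomputable def riCR {M : ℕ} (a : Fin M → ℝ × ℝ) (ℓ k : ℝ) (e x : ℝ × ℝ) :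
    Finset (Fin M) :=
  CR a ℓ k e x \ bCR a ℓ k e x

/-- Demand points in the first quadrant of q : p₁ ≥ q₁, p₂ ≥ q₂. -/
noncomputable def Q1 {M : ℕ} (a : Fin M → ℝ × ℝ) (q : ℝ × ℝ) : Finset (Fin M) :=
  univ.filter fun i => q.1 ≤ (a i).1 ∧ q.2 ≤ (a i).2

/-- Demand points in the second quadrant of q : p₁ < q₁, p₂ ≥ q₂. -/
noncomputable def Q2 {M : ℕ} (a : Fin M → ℝ × ℝ) (q : ℝ × ℝ) : Finset (Fin M) :=
  univ.filter fun i => (a i).1 < q.1 ∧ q.2 ≤ (a i).2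

/-- Demand points in the third quadrant of q : p₁ < q₁, p₂ < q₂. -/
noncomputable def Q3 {M : ℕ} (a : Fin M → ℝ × ℝ) (q : ℝ × ℝ) : Finset (Fin M) :=
  univ.filter fun i => (a i).1 < q.1 ∧ (a i).2 < q.2

/-- Demand points in the fourth quadrant of q : p₁ ≥ q₁, p₂ < q₂. -/
noncomputable def Q4 {M : ℕ} (a : Fin M → ℝ × ℝ) (q : ℝ × ℝ) : Finset (Fin M) :=
  univ.filter fun i => q.1 ≤ (a i).1 ∧ (a i).2 < q.2


lemma abs_shift_sum (b c lam : ℝ) (hl : 0 ≤ lam) (h : c + lam ≤ b ∨ b + lam ≤ c) :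
    |b - lam - c| + |b + lam - c| = 2 * |b - c| := by
  rcases h with h | h
  · rw [abs_of_nonneg (by linarith), abs_of_nonneg (by linarith),
      abs_of_nonneg (by linarith)]; ring
  · rw [abs_of_nonpos (by linarith), abs_of_nonpos (by linarith),
      abs_of_nonpos (by linarith)]; ring

/-- Theorem 2.2: if neither x nor e lies on a vertical line through a demand point,
then one of the two horizontal perturbations of the segment does not increase the
objective function. -/
theorem horizontal_perturbation {M : ℕ} (a : Fin M → ℝ × ℝ) (ω : Fin M → ℝ)
    (ℓ k : ℝ) (hℓ : 0 < ℓ) (hk : 1 ≤ k) (hω : ∀ i, 0 < ω i)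
    (e x : ℝ × ℝ)
    (hlen : Real.sqrt ((x.1 - e.1) ^ 2 + (x.2 - e.2) ^ 2) = ℓ)
    (hx1 : x.1 ≤ 0) (he1 : 0 ≤ e.1) (hx2 : x.2 ≤ 0) (he2 : 0 ≤ e.2)
    (hne : ∀ i, (a i).1 ≠ x.1 ∧ (a i).1 ≠ e.1)
    (lam : ℝ) (hlam : 0 < lam)
    (x' e' x'' e'' : ℝ × ℝ)
    (hx' : x' = x + (-lam, 0)) (he' : e' = e + (-lam, 0))
    (hx'' : x'' = x + (lam, 0)) (he'' : e'' = e + (lam, 0))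
    (hCR' : CR a ℓ k e' x' \ bCR a ℓ k e x = CR a ℓ k e x \ bCR a ℓ k e x)
    (hCR'' : CR a ℓ k e'' x'' \ bCR a ℓ k e x = CR a ℓ k e x \ bCR a ℓ k e x)
    (hQ1 : Q1 a x' = Q1 a x ∧ Q1 a x'' = Q1 a x)
    (hQ2 : Q2 a x' = Q2 a x ∧ Q2 a x'' = Q2 a x)
    (hQ3 : Q3 a x' = Q3 a x ∧ Q3 a x'' = Q3 a x)
    (hQ4 : Q4 a x' = Q4 a x ∧ Q4 a x'' = Q4 a x)
    (hsep : ∀ i, ((a i).1 < e.1 → (a i).1 < e.1 - lam) ∧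
                 (e.1 < (a i).1 → e.1 + lam < (a i).1)) :
    fObj a ω ℓ k e' x' ≤ fObj a ω ℓ k e x ∨
    fObj a ω ℓ k e'' x'' ≤ fObj a ω ℓ k e x := by
  have hsum : fObj a ω ℓ k e' x' + fObj a ω ℓ k e'' x'' ≤ 2 * fObj a ω ℓ k e x := by
    unfold fObj
    rw [← Finset.sum_add_distrib, Finset.mul_sum]
    apply Finset.sum_le_sum
    intro i _
    have hA : l1 (x' - a i) + l1 (x'' - a i) = 2 * l1 (x - a i) := by
      have hx1' : (a i).1 + lam ≤ x.1 ∨ x.1 + lam ≤ (a i).1 := by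
        rcases lt_or_gt_of_ne (hne i).1 with h | h
        · left
          rcases le_or_gt x.2 (a i).2 with h2 | h2
          · have hm : i ∈ Q2 a x := by simp [Q2, h, h2]
            rw [← hQ2.1] at hm
            simp [Q2, hx'] at hm
            linarith [hm.1]
          · have hm : i ∈ Q3 a x := by simp [Q3, h, h2]
            rw [← hQ3.1] at hm
            simp [Q3, hx'] at hm
            linarith [hm.1]
        · right
          rcases le_or_gt x.2 (a i).2 with h2 | h2
          · have hm : i ∈ Q1 a x := by simp [Q1, le_of_lt h, h2]
            rw [← hQ1.2] at hm
            simp [Q1, hx''] at hm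
            linarith [hm.1]
          · have hm : i ∈ Q4 a x := by simp [Q4, le_of_lt h, h2]
            rw [← hQ4.2] at hm
            simp [Q4, hx''] at hm
            linarith [hm.1]
      have key := abs_shift_sum x.1 (a i).1 lam hlam.le hx1'
      simp only [l1, hx', hx'', Prod.fst_sub, Prod.snd_sub, Prod.fst_add, Prod.snd_add]
      rw [show x.1 + -lam - (a i).1 = x.1 - lam - (a i).1 by ring,
        show x.1 + lam - (a i).1 = x.1 + lam - (a i).1 by ring]
      norm_num
      linarith [key]
    have hB : l1 (e' - a i) + l1 (e'' - a i) = 2 * l1 (e - a i) := by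
      have he1' : (a i).1 + lam ≤ e.1 ∨ e.1 + lam ≤ (a i).1 := by
        rcases lt_or_gt_of_ne (hne i).2 with h | h
        · left; linarith [(hsep i).1 h]
        · right; linarith [(hsep i).2 h]
      have key := abs_shift_sum e.1 (a i).1 lam hlam.le he1'
      simp only [l1, he', he'', Prod.fst_sub, Prod.snd_sub, Prod.fst_add, Prod.snd_add]
      rw [show e.1 + -lam - (a i).1 = e.1 - lam - (a i).1 by ring]
      norm_num
      linarith [key]
    have h1 := min_le_left (l1 (x' - a i)) (l1 (e' - a i) + ℓ / k)
    have h2 := min_le_left (l1 (x'' - a i)) (l1 (e'' - a i) + ℓ / k)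
    have h3 := min_le_right (l1 (x' - a i)) (l1 (e' - a i) + ℓ / k)
    have h4 := min_le_right (l1 (x'' - a i)) (l1 (e'' - a i) + ℓ / k)
    have hωi := (hω i).le
    rcases le_total (l1 (x - a i)) (l1 (e - a i) + ℓ / k) with h | h
    · rw [min_eq_left h]; nlinarith
    · rw [min_eq_right h]; nlinarith
  by_contra hcon
  push_neg at hcon
  linarith [hcon.1, hcon.2]
end

section
/- Let e,x∈ℝ² with ‖x−e‖₂=ℓ, x₁≤0≤e₁, x₂≤0≤e₂, and a_{i1}≠x₁, a_{i1}≠e₁ for all i=1,…,M. Let λ>0 and set x'=x+(−λ,0), e'=e+(−λ,0), x''=x+(λ,0), e''=e+(λ,0), and assume the admissibility conditions: CR_{e',x'}∖∂CR_{e,x} = CR_{e,x}∖∂CR_{e,x} = CR_{e'',x''}∖∂CR_{e,x}; C_x^i(A)=C_{x'}^i(A)=C_{x''}^i(A) for i=1,…,4; and for every i, a_{i1}<e₁ implies a_{i1}<e₁−λ and a_{i1}>e₁ implies a_{i1}>e₁+λ. Then f(e',x')−f(e,x) = λ(ω¹−ω²−ω³+ω⁴+ω⁺−ω⁻+ω^{δ+}−ω^{δ−})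 and f(e'',x'')−f(e,x) = λ(−ω¹+ω²+ω³−ω⁴−ω⁺+ω⁻−ω^{δ+}−ω^{δ−}). -/
open Real Finset
open scoped Classical

/-- ω¹ : total weight of demand points in C_x¹(A) ∖ CR. -/
noncomputable def w1 {M : ℕ} (a : Fin M → ℝ × ℝ) (ω : Fin M → ℝ) (ℓ k : ℝ)
    (e x : ℝ × ℝ) : ℝ := ∑ j ∈ Q1 a x \ CR a ℓ k e x, ω j

/-- ω² : total weight of demand points in C_x²(A) ∖ ri(CR). -/
noncomputable def w2 {M : ℕ} (a : Fin M → ℝ × ℝ) (ω : Fin M → ℝ) (ℓ k : ℝ)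
    (e x : ℝ × ℝ) : ℝ := ∑ j ∈ Q2 a x \ riCR a ℓ k e x, ω j

/-- ω³ : total weight of demand points in C_x³(A). -/
noncomputable def w3 {M : ℕ} (a : Fin M → ℝ × ℝ) (ω : Fin M → ℝ) (ℓ k : ℝ)
    (e x : ℝ × ℝ) : ℝ := ∑ j ∈ Q3 a x, ω j

/-- ω⁴ : total weight of demand points in C_x⁴(A) ∖ CR. -/
noncomputable def w4 {M : ℕ} (a : Fin M → ℝ × ℝ) (ω : Fin M → ℝ) (ℓ k : ℝ)
    (e x : ℝ × ℝ) : ℝ := ∑ j ∈ Q4 a x \ CR a ℓ k e x, ω j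

/-- ω⁺ with splitting coordinate 2 : weight of ri(CR) points with a_{j2} > e₂. -/
noncomputable def wP2 {M : ℕ} (a : Fin M → ℝ × ℝ) (ω : Fin M → ℝ) (ℓ k : ℝ)
    (e x : ℝ × ℝ) : ℝ := ∑ j ∈ (riCR a ℓ k e x).filter (fun j => e.2 < (a j).2), ω j

/-- ω⁻ with splitting coordinate 2 : weight of ri(CR) points with a_{j2} < e₂. -/
noncomputable def wM2 {M : ℕ} (a : Fin M → ℝ × ℝ) (ω : Fin M → ℝ) (ℓ k : ℝ)
    (e x : ℝ × ℝ) : ℝ := ∑ j ∈ (riCR a ℓ k e x).filter (fun j => (a j).2 < e.2), ω j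

/-- ω^{δ+} with splitting coordinate 2 : weight of ∂CR ∖ C_x²(A) points with a_{j2} > e₂. -/
noncomputable def wDP2 {M : ℕ} (a : Fin M → ℝ × ℝ) (ω : Fin M → ℝ) (ℓ k : ℝ)
    (e x : ℝ × ℝ) : ℝ :=
  ∑ j ∈ ((bCR a ℓ k e x) \ Q2 a x).filter (fun j => e.2 < (a j).2), ω j

/-- ω^{δ−} with splitting coordinate 2 : weight of ∂CR ∖ C_x²(A) points with a_{j2} < e₂. -/
noncomputable def wDM2 {M : ℕ} (a : Fin M → ℝ × ℝ) (ω : Fin M → ℝ) (ℓ k : ℝ)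
    (e x : ℝ × ℝ) : ℝ :=
  ∑ j ∈ ((bCR a ℓ k e x) \ Q2 a x).filter (fun j => (a j).2 < e.2), ω j

/-- ω⁺ with splitting coordinate 1 : weight of ri(CR) points with a_{j1} > e₁. -/
noncomputable def wP1 {M : ℕ} (a : Fin M → ℝ × ℝ) (ω : Fin M → ℝ) (ℓ k : ℝ)
    (e x : ℝ × ℝ) : ℝ := ∑ j ∈ (riCR a ℓ k e x).filter (fun j => e.1 < (a j).1), ω j

/-- ω⁻ with splitting coordinate 1 : weight of ri(CR) points with a_{j1} < e₁. -/
noncomputable def wM1 {M : ℕ} (a : Fin M → ℝ × ℝ) (ω : Fin M → ℝ) (ℓ k : ℝ)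
    (e x : ℝ × ℝ) : ℝ := ∑ j ∈ (riCR a ℓ k e x).filter (fun j => (a j).1 < e.1), ω j

/-- ω^{δ+} with splitting coordinate 1 : weight of ∂CR ∖ C_x²(A) points with a_{j1} > e₁. -/
noncomputable def wDP1 {M : ℕ} (a : Fin M → ℝ × ℝ) (ω : Fin M → ℝ) (ℓ k : ℝ)
    (e x : ℝ × ℝ) : ℝ :=
  ∑ j ∈ ((bCR a ℓ k e x) \ Q2 a x).filter (fun j => e.1 < (a j).1), ω j

/-- ω^{δ−} with splitting coordinate 1 : weight of ∂CR ∖ C_x²(A) points with a_{j1} < e₁. -/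
noncomputable def wDM1 {M : ℕ} (a : Fin M → ℝ × ℝ) (ω : Fin M → ℝ) (ℓ k : ℝ)
    (e x : ℝ × ℝ) : ℝ :=
  ∑ j ∈ ((bCR a ℓ k e x) \ Q2 a x).filter (fun j => (a j).1 < e.1), ω j

/-- ω^a with splitting coordinate 2 (the coordinates as written). -/
noncomputable def wA2 {M : ℕ} (a : Fin M → ℝ × ℝ) (ω : Fin M → ℝ) (ℓ k : ℝ)
    (e x : ℝ × ℝ) : ℝ :=
  w1 a ω ℓ k e x - w2 a ω ℓ k e x - w3 a ω ℓ k e x + w4 a ω ℓ k e x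

/-- ω^b with splitting coordinate 2. -/
noncomputable def wB2 {M : ℕ} (a : Fin M → ℝ × ℝ) (ω : Fin M → ℝ) (ℓ k : ℝ)
    (e x : ℝ × ℝ) : ℝ :=
  wP2 a ω ℓ k e x - wM2 a ω ℓ k e x + wDP2 a ω ℓ k e x

/-- ω^a with splitting coordinate 1 (coordinates interchanged: the roles of
C_x² and C_x⁴ are swapped). -/
noncomputable def wA1 {M : ℕ} (a : Fin M → ℝ × ℝ) (ω : Fin M → ℝ) (ℓ k : ℝ)
    (e x : ℝ × ℝ) : ℝ :=
  w1 a ω ℓ k e x - (∑ j ∈ Q4 a x \ riCR a ℓ k e x, ω j) - w3 a ω ℓ k e x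
    + (∑ j ∈ Q2 a x \ CR a ℓ k e x, ω j)

/-- ω^b with splitting coordinate 1 (coordinates interchanged: ∂CR points outside
C_x⁴ with a_{j1} > e₁ in the third summand). -/
noncomputable def wB1 {M : ℕ} (a : Fin M → ℝ × ℝ) (ω : Fin M → ℝ) (ℓ k : ℝ)
    (e x : ℝ × ℝ) : ℝ :=
  wP1 a ω ℓ k e x - wM1 a ω ℓ k e x
    + (∑ j ∈ ((bCR a ℓ k e x) \ Q4 a x).filter (fun j => e.1 < (a j).1), ω j)


set_option maxHeartbeats 3200000


lemma minShiftL (dx de sx se lam : ℝ) (hlam : 0 < lam) (hs : se ≤ sx)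
    (h : ¬ de ≤ dx → dx + sx * lam ≤ de + se * lam) :
    min (dx + sx * lam) (de + se * lam) - min dx de
      = lam * (if de ≤ dx then se else sx) := by
  by_cases hd : de ≤ dx
  · rw [if_pos hd, min_eq_right hd, min_eq_right (by nlinarith)]; ring
  · rw [if_neg hd, min_eq_left (not_le.1 hd).le, min_eq_left (h hd)]; ring

lemma minShiftR (dx de sx se lam : ℝ) (hlam : 0 < lam) (hs : se ≤ sx)
    (h : de ≤ dx → ¬ dx = de → de - se * lam ≤ dx - sx * lam) :
    min (dx - sx * lam) (de - se * lam) - min dx de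
      = lam * (if de ≤ dx ∧ ¬ dx = de then -se else -sx) := by
  by_cases hd : de ≤ dx ∧ ¬ dx = de
  · rw [if_pos hd, min_eq_right hd.1, min_eq_right (h hd.1 hd.2)]; ring
  · rw [if_neg hd]
    have hxd : dx ≤ de := by
      rcases not_and_or.1 hd with h1 | h1
      · exact (not_le.1 h1).le
      · exact le_of_eq (not_not.1 h1)
    rw [min_eq_left hxd, min_eq_left (by nlinarith)]; ring

lemma pointwiseL (w dx de x1 x2 e1 a1 a2 : ℝ)
    (hne1 : a1 ≠ x1) (hne2 : a1 ≠ e1) (hxe : x1 ≤ e1)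
    (hQ3 : a1 < x1 → a2 < x2 → dx < de) :
    w * (if de ≤ dx then (if e1 < a1 then (1:ℝ) else -1) else (if x1 < a1 then 1 else -1)) =
      (if (x1 ≤ a1 ∧ x2 ≤ a2) ∧ ¬ de ≤ dx then w else 0)
      - (if (a1 < x1 ∧ x2 ≤ a2) ∧ ¬ (de ≤ dx ∧ ¬ dx = de) then w else 0)
      - (if a1 < x1 ∧ a2 < x2 then w else 0)
      + (if (x1 ≤ a1 ∧ a2 < x2) ∧ ¬ de ≤ dx then w else 0)
      + (if (de ≤ dx ∧ ¬ dx = de) ∧ e1 < a1 then w else 0)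
      - (if (de ≤ dx ∧ ¬ dx = de) ∧ a1 < e1 then w else 0)
      + (if (dx = de ∧ ¬ (a1 < x1 ∧ x2 ≤ a2)) ∧ e1 < a1 then w else 0)
      - (if (dx = de ∧ ¬ (a1 < x1 ∧ x2 ≤ a2)) ∧ a1 < e1 then w else 0) := by
  by_cases hA : x1 ≤ a1 <;>
  by_cases hB : a1 < x1 <;>
  by_cases hI : x1 < a1 <;>
  by_cases hC : x2 ≤ a2 <;>
  by_cases hD : a2 < x2 <;>
  by_cases hE : de ≤ dx <;>
  by_cases hF : dx = de <;>
  by_cases hG : e1 < a1 <;>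
  by_cases hH : a1 < e1 <;>
  simp only [hA, hB, hI, hC, hD, hE, hF, hG, hH, le_refl, eq_self_iff_true,
    not_true, not_false_eq_true, true_and, and_true, false_and, and_false,
    if_true, if_false, not_not] <;>
  first
  | ring1
  | (exfalso; linarith)
  | (exfalso; linarith [hQ3 hB hD])
  | exact absurd (le_antisymm (not_lt.1 hG) (not_lt.1 hH)) hne2
  | exact absurd (le_antisymm (not_lt.1 hI) hA) hne1

lemma pointwiseR (w dx de x1 x2 e1 a1 a2 : ℝ)
    (hne1 : a1 ≠ x1) (hne2 : a1 ≠ e1) (hxe : x1 ≤ e1)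
    (hQ3 : a1 < x1 → a2 < x2 → dx < de) :
    w * (if de ≤ dx ∧ ¬ dx = de then -(if e1 < a1 then (1:ℝ) else -1)
         else -(if x1 < a1 then (1:ℝ) else -1)) =
      -(if (x1 ≤ a1 ∧ x2 ≤ a2) ∧ ¬ de ≤ dx then w else 0)
      + (if (a1 < x1 ∧ x2 ≤ a2) ∧ ¬ (de ≤ dx ∧ ¬ dx = de) then w else 0)
      + (if a1 < x1 ∧ a2 < x2 then w else 0)
      - (if (x1 ≤ a1 ∧ a2 < x2) ∧ ¬ de ≤ dx then w else 0)
      - (if (de ≤ dx ∧ ¬ dx = de) ∧ e1 < a1 then w else 0)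
      + (if (de ≤ dx ∧ ¬ dx = de) ∧ a1 < e1 then w else 0)
      - (if (dx = de ∧ ¬ (a1 < x1 ∧ x2 ≤ a2)) ∧ e1 < a1 then w else 0)
      - (if (dx = de ∧ ¬ (a1 < x1 ∧ x2 ≤ a2)) ∧ a1 < e1 then w else 0) := by
  by_cases hA : x1 ≤ a1 <;>
  by_cases hB : a1 < x1 <;>
  by_cases hI : x1 < a1 <;>
  by_cases hC : x2 ≤ a2 <;>
  by_cases hD : a2 < x2 <;>
  by_cases hE : de ≤ dx <;>
  by_cases hF : dx = de <;>
  by_cases hG : e1 < a1 <;>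
  by_cases hH : a1 < e1 <;>
  simp only [hA, hB, hI, hC, hD, hE, hF, hG, hH, le_refl, eq_self_iff_true,
    not_true, not_false_eq_true, true_and, and_true, false_and, and_false,
    if_true, if_false, not_not] <;>
  first
  | ring1
  | (exfalso; linarith)
  | (exfalso; linarith [hQ3 hB hD])
  | exact absurd (le_antisymm (not_lt.1 hG) (not_lt.1 hH)) hne2
  | exact absurd (le_antisymm (not_lt.1 hI) hA) hne1


/-- Coefficient of the left perturbation. -/
noncomputable def coefL (p x e : ℝ × ℝ) (ℓ k : ℝ) : ℝ :=
  if l1 (e - p) + ℓ / k ≤ l1 (x - p) then (if e.1 < p.1 then 1 else -1)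
  else (if x.1 < p.1 then 1 else -1)

/-- Coefficient of the right perturbation. -/
noncomputable def coefR (p x e : ℝ × ℝ) (ℓ k : ℝ) : ℝ :=
  if l1 (e - p) + ℓ / k ≤ l1 (x - p) ∧ ¬ l1 (x - p) = l1 (e - p) + ℓ / k
  then -(if e.1 < p.1 then (1:ℝ) else -1)
  else -(if x.1 < p.1 then (1:ℝ) else -1)

/-- The exact change in the objective function under the two horizontal perturbations
of the segment (the computation inside the proof of Theorem 2.2):
f(e',x')−f(e,x) = λ(ω¹−ω²−ω³+ω⁴+ω⁺−ω⁻+ω^{δ+}−ω^{δ−}) and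
f(e'',x'')−f(e,x) = λ(−ω¹+ω²+ω³−ω⁴−ω⁺+ω⁻−ω^{δ+}−ω^{δ−}),
with the splits taken on the first coordinate. -/
theorem horizontal_perturbation_delta {M : ℕ} (a : Fin M → ℝ × ℝ) (ω : Fin M → ℝ)
    (ℓ k : ℝ) (hℓ : 0 < ℓ) (hk : 1 ≤ k) (hω : ∀ i, 0 < ω i)
    (e x : ℝ × ℝ)
    (hlen : Real.sqrt ((x.1 - e.1) ^ 2 + (x.2 - e.2) ^ 2) = ℓ)
    (hx1 : x.1 ≤ 0) (he1 : 0 ≤ e.1) (hx2 : x.2 ≤ 0) (he2 : 0 ≤ e.2)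
    (hne : ∀ i, (a i).1 ≠ x.1 ∧ (a i).1 ≠ e.1)
    (lam : ℝ) (hlam : 0 < lam)
    (x' e' x'' e'' : ℝ × ℝ)
    (hx' : x' = x + (-lam, 0)) (he' : e' = e + (-lam, 0))
    (hx'' : x'' = x + (lam, 0)) (he'' : e'' = e + (lam, 0))
    (hCR' : CR a ℓ k e' x' \ bCR a ℓ k e x = CR a ℓ k e x \ bCR a ℓ k e x)
    (hCR'' : CR a ℓ k e'' x'' \ bCR a ℓ k e x = CR a ℓ k e x \ bCR a ℓ k e x)
    (hQ1 : Q1 a x' = Q1 a x ∧ Q1 a x'' = Q1 a x)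
    (hQ2 : Q2 a x' = Q2 a x ∧ Q2 a x'' = Q2 a x)
    (hQ3 : Q3 a x' = Q3 a x ∧ Q3 a x'' = Q3 a x)
    (hQ4 : Q4 a x' = Q4 a x ∧ Q4 a x'' = Q4 a x)
    (hsep : ∀ i, ((a i).1 < e.1 → (a i).1 < e.1 - lam) ∧
                 (e.1 < (a i).1 → e.1 + lam < (a i).1)) :
    fObj a ω ℓ k e' x' - fObj a ω ℓ k e x =
      lam * (w1 a ω ℓ k e x - w2 a ω ℓ k e x - w3 a ω ℓ k e x + w4 a ω ℓ k e x
        + wP1 a ω ℓ k e x - wM1 a ω ℓ k e x + wDP1 a ω ℓ k e x - wDM1 a ω ℓ k e x) ∧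
    fObj a ω ℓ k e'' x'' - fObj a ω ℓ k e x =
      lam * (-(w1 a ω ℓ k e x) + w2 a ω ℓ k e x + w3 a ω ℓ k e x - w4 a ω ℓ k e x
        - wP1 a ω ℓ k e x + wM1 a ω ℓ k e x - wDP1 a ω ℓ k e x - wDM1 a ω ℓ k e x) := by
  subst hx' he' hx'' he''
  have hkk : (0:ℝ) < k := by linarith
  have hk0 : 0 < ℓ / k := div_pos hℓ hkk
  have hxe : x.1 ≤ e.1 := le_trans hx1 he1
  have hc1 : ∀ (p : ℝ × ℝ) (t : ℝ), (p + (t, (0:ℝ))).1 = p.1 + t := fun _ _ => rfl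
  have hc2 : ∀ (p : ℝ × ℝ) (t : ℝ), (p + (t, (0:ℝ))).2 = p.2 := fun p t => by
    show p.2 + 0 = p.2; ring
  have hxlt : ∀ i, (a i).1 < x.1 → (a i).1 < x.1 - lam := by
    intro i h
    by_cases h2 : x.2 ≤ (a i).2
    · have h3 := Finset.ext_iff.1 hQ2.1 i
      simp only [Q2, Finset.mem_filter, Finset.mem_univ, true_and, hc1, hc2] at h3
      have := (h3.2 ⟨h, h2⟩).1
      linarith
    · have h3 := Finset.ext_iff.1 hQ3.1 i
      simp only [Q3, Finset.mem_filter, Finset.mem_univ, true_and, hc1, hc2] at h3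
      have := (h3.2 ⟨h, not_le.1 h2⟩).1
      linarith
  have hxgt : ∀ i, x.1 < (a i).1 → x.1 + lam ≤ (a i).1 := by
    intro i h
    by_cases h2 : x.2 ≤ (a i).2
    · have h3 := Finset.ext_iff.1 hQ1.2 i
      simp only [Q1, Finset.mem_filter, Finset.mem_univ, true_and, hc1, hc2] at h3
      exact (h3.2 ⟨h.le, h2⟩).1
    · have h3 := Finset.ext_iff.1 hQ4.2 i
      simp only [Q4, Finset.mem_filter, Finset.mem_univ, true_and, hc1, hc2] at h3
      exact (h3.2 ⟨h.le, not_le.1 h2⟩).1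
  -- l1 component formulas
  have hdxL : ∀ i, l1 (x + (-lam, 0) - a i)
      = l1 (x - a i) + (if x.1 < (a i).1 then (1:ℝ) else -1) * lam := by
    intro i
    have e1 : l1 (x + (-lam, 0) - a i)
        = |x.1 + -lam - (a i).1| + |x.2 + 0 - (a i).2| := rfl
    have e0 : l1 (x - a i) = |x.1 - (a i).1| + |x.2 - (a i).2| := rfl
    rw [e1, e0, show x.2 + 0 - (a i).2 = x.2 - (a i).2 from by ring]
    rcases (hne i).1.lt_or_gt with hlt | hlt
    · have hs := hxlt i hlt
      rw [if_neg (by linarith : ¬ x.1 < (a i).1),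
        abs_of_pos (by linarith : (0:ℝ) < x.1 + -lam - (a i).1),
        abs_of_pos (by linarith : (0:ℝ) < x.1 - (a i).1)]
      ring
    · rw [if_pos hlt,
        abs_of_neg (by linarith : x.1 + -lam - (a i).1 < 0),
        abs_of_neg (by linarith : x.1 - (a i).1 < 0)]
      ring
  have hdxR : ∀ i, l1 (x + (lam, 0) - a i)
      = l1 (x - a i) - (if x.1 < (a i).1 then (1:ℝ) else -1) * lam := by
    intro i
    have e1 : l1 (x + (lam, 0) - a i)
        = |x.1 + lam - (a i).1| + |x.2 + 0 - (a i).2| := rfl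
    have e0 : l1 (x - a i) = |x.1 - (a i).1| + |x.2 - (a i).2| := rfl
    rw [e1, e0, show x.2 + 0 - (a i).2 = x.2 - (a i).2 from by ring]
    rcases (hne i).1.lt_or_gt with hlt | hlt
    · rw [if_neg (by linarith : ¬ x.1 < (a i).1),
        abs_of_pos (by linarith : (0:ℝ) < x.1 + lam - (a i).1),
        abs_of_pos (by linarith : (0:ℝ) < x.1 - (a i).1)]
      ring
    · have hs := hxgt i hlt
      rw [if_pos hlt,
        abs_of_nonpos (by linarith : x.1 + lam - (a i).1 ≤ 0),
        abs_of_neg (by linarith : x.1 - (a i).1 < 0)]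
      ring
  have hdeL : ∀ i, l1 (e + (-lam, 0) - a i)
      = l1 (e - a i) + (if e.1 < (a i).1 then (1:ℝ) else -1) * lam := by
    intro i
    have e1 : l1 (e + (-lam, 0) - a i)
        = |e.1 + -lam - (a i).1| + |e.2 + 0 - (a i).2| := rfl
    have e0 : l1 (e - a i) = |e.1 - (a i).1| + |e.2 - (a i).2| := rfl
    rw [e1, e0, show e.2 + 0 - (a i).2 = e.2 - (a i).2 from by ring]
    rcases (hne i).2.lt_or_gt with hlt | hlt
    · have hs := (hsep i).1 hlt
      rw [if_neg (by linarith : ¬ e.1 < (a i).1),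
        abs_of_pos (by linarith : (0:ℝ) < e.1 + -lam - (a i).1),
        abs_of_pos (by linarith : (0:ℝ) < e.1 - (a i).1)]
      ring
    · rw [if_pos hlt,
        abs_of_neg (by linarith : e.1 + -lam - (a i).1 < 0),
        abs_of_neg (by linarith : e.1 - (a i).1 < 0)]
      ring
  have hdeR : ∀ i, l1 (e + (lam, 0) - a i)
      = l1 (e - a i) - (if e.1 < (a i).1 then (1:ℝ) else -1) * lam := by
    intro i
    have e1 : l1 (e + (lam, 0) - a i)
        = |e.1 + lam - (a i).1| + |e.2 + 0 - (a i).2| := rfl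
    have e0 : l1 (e - a i) = |e.1 - (a i).1| + |e.2 - (a i).2| := rfl
    rw [e1, e0, show e.2 + 0 - (a i).2 = e.2 - (a i).2 from by ring]
    rcases (hne i).2.lt_or_gt with hlt | hlt
    · rw [if_neg (by linarith : ¬ e.1 < (a i).1),
        abs_of_pos (by linarith : (0:ℝ) < e.1 + lam - (a i).1),
        abs_of_pos (by linarith : (0:ℝ) < e.1 - (a i).1)]
      ring
    · have hs := (hsep i).2 hlt
      rw [if_pos hlt,
        abs_of_neg (by linarith : e.1 + lam - (a i).1 < 0),
        abs_of_neg (by linarith : e.1 - (a i).1 < 0)]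
      ring
  have hse : ∀ i, (if e.1 < (a i).1 then (1:ℝ) else -1) ≤ (if x.1 < (a i).1 then (1:ℝ) else -1) := by
    intro i
    by_cases h1 : e.1 < (a i).1 <;> by_cases h2 : x.1 < (a i).1 <;>
      simp only [h1, h2, if_true, if_false] <;> linarith
  -- key per-point identities
  have hKey1 : ∀ i, min (l1 (x + (-lam, 0) - a i)) (l1 (e + (-lam, 0) - a i) + ℓ / k)
      - min (l1 (x - a i)) (l1 (e - a i) + ℓ / k) = lam * coefL (a i) x e ℓ k := by
    intro i
    have himp : ¬ (l1 (e - a i) + ℓ / k ≤ l1 (x - a i)) →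
        l1 (x - a i) + (if x.1 < (a i).1 then (1:ℝ) else -1) * lam ≤
          (l1 (e - a i) + ℓ / k) + (if e.1 < (a i).1 then (1:ℝ) else -1) * lam := by
      intro hnot
      by_contra hcon
      push_neg at hcon
      have hmem : i ∈ CR a ℓ k (e + (-lam, 0)) (x + (-lam, 0)) \ bCR a ℓ k e x := by
        rw [Finset.mem_sdiff]
        constructor
        · simp only [CR, Finset.mem_filter, Finset.mem_univ, true_and]
          rw [hdxL i, hdeL i]
          linarith
        · simp only [bCR, Finset.mem_filter, Finset.mem_univ, true_and]
          exact fun hq => hnot hq.ge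
      rw [hCR'] at hmem
      rw [Finset.mem_sdiff] at hmem
      have := (Finset.mem_filter.1 hmem.1).2
      exact hnot this
    have hde' : l1 (e + (-lam, 0) - a i) + ℓ / k
        = (l1 (e - a i) + ℓ / k) + (if e.1 < (a i).1 then (1:ℝ) else -1) * lam := by
      rw [hdeL i]; ring
    rw [hdxL i, hde']
    show _ = lam * (if l1 (e - a i) + ℓ / k ≤ l1 (x - a i)
      then (if e.1 < (a i).1 then (1:ℝ) else -1) else (if x.1 < (a i).1 then (1:ℝ) else -1))
    exact minShiftL _ _ _ _ _ hlam (hse i) himp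
  have hKey2 : ∀ i, min (l1 (x + (lam, 0) - a i)) (l1 (e + (lam, 0) - a i) + ℓ / k)
      - min (l1 (x - a i)) (l1 (e - a i) + ℓ / k) = lam * coefR (a i) x e ℓ k := by
    intro i
    have himp : l1 (e - a i) + ℓ / k ≤ l1 (x - a i) →
        ¬ l1 (x - a i) = l1 (e - a i) + ℓ / k →
        (l1 (e - a i) + ℓ / k) - (if e.1 < (a i).1 then (1:ℝ) else -1) * lam ≤
          l1 (x - a i) - (if x.1 < (a i).1 then (1:ℝ) else -1) * lam := by
      intro hle hne'
      have hmem : i ∈ CR a ℓ k e x \ bCR a ℓ k e x := by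
        rw [Finset.mem_sdiff]
        constructor
        · simp only [CR, Finset.mem_filter, Finset.mem_univ, true_and]
          exact hle
        · simp only [bCR, Finset.mem_filter, Finset.mem_univ, true_and]
          exact hne'
      rw [← hCR''] at hmem
      have h2 := (Finset.mem_filter.1 (Finset.mem_sdiff.1 hmem).1).2
      rw [hdxR i, hdeR i] at h2
      linarith
    have hde' : l1 (e + (lam, 0) - a i) + ℓ / k
        = (l1 (e - a i) + ℓ / k) - (if e.1 < (a i).1 then (1:ℝ) else -1) * lam := by
      rw [hdeR i]; ring
    rw [hdxR i, hde']
    show _ = lam * (if l1 (e - a i) + ℓ / k ≤ l1 (x - a i) ∧ ¬ l1 (x - a i) = l1 (e - a i) + ℓ / k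
      then -(if e.1 < (a i).1 then (1:ℝ) else -1) else -(if x.1 < (a i).1 then (1:ℝ) else -1))
    exact minShiftR _ _ _ _ _ hlam (hse i) himp
  -- geometric fact : third quadrant never captures
  have hQ3CR : ∀ i, (a i).1 < x.1 → (a i).2 < x.2 →
      l1 (x - a i) < l1 (e - a i) + ℓ / k := by
    intro i h1 h2
    have e0 : l1 (x - a i) = |x.1 - (a i).1| + |x.2 - (a i).2| := rfl
    have e1 : l1 (e - a i) = |e.1 - (a i).1| + |e.2 - (a i).2| := rfl
    rw [e0, e1,
      abs_of_pos (by linarith : (0:ℝ) < x.1 - (a i).1),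
      abs_of_pos (by linarith : (0:ℝ) < x.2 - (a i).2),
      abs_of_pos (by linarith : (0:ℝ) < e.1 - (a i).1),
      abs_of_pos (by linarith : (0:ℝ) < e.2 - (a i).2)]
    linarith
  -- set rewrites
  have hs1 : Q1 a x \ CR a ℓ k e x = univ.filter (fun i =>
      (x.1 ≤ (a i).1 ∧ x.2 ≤ (a i).2) ∧ ¬ (l1 (e - a i) + ℓ / k ≤ l1 (x - a i))) := by
    ext i
    simp only [Finset.mem_sdiff, Q1, CR, Finset.mem_filter, Finset.mem_univ, true_and]
  have hs2 : Q2 a x \ riCR a ℓ k e x = univ.filter (fun i =>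
      ((a i).1 < x.1 ∧ x.2 ≤ (a i).2) ∧
        ¬ ((l1 (e - a i) + ℓ / k ≤ l1 (x - a i)) ∧ ¬ l1 (x - a i) = l1 (e - a i) + ℓ / k)) := by
    ext i
    simp only [Finset.mem_sdiff, Q2, riCR, CR, bCR, Finset.mem_filter, Finset.mem_univ,
      true_and]
  have hs3 : Q3 a x = univ.filter (fun i => (a i).1 < x.1 ∧ (a i).2 < x.2) := rfl
  have hs4 : Q4 a x \ CR a ℓ k e x = univ.filter (fun i =>
      (x.1 ≤ (a i).1 ∧ (a i).2 < x.2) ∧ ¬ (l1 (e - a i) + ℓ / k ≤ l1 (x - a i))) := by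
    ext i
    simp only [Finset.mem_sdiff, Q4, CR, Finset.mem_filter, Finset.mem_univ, true_and]
  have hs5 : (riCR a ℓ k e x).filter (fun j => e.1 < (a j).1) = univ.filter (fun i =>
      ((l1 (e - a i) + ℓ / k ≤ l1 (x - a i)) ∧ ¬ l1 (x - a i) = l1 (e - a i) + ℓ / k)
        ∧ e.1 < (a i).1) := by
    ext i
    simp only [riCR, CR, bCR, Finset.mem_filter, Finset.mem_sdiff, Finset.mem_univ, true_and]
  have hs6 : (riCR a ℓ k e x).filter (fun j => (a j).1 < e.1) = univ.filter (fun i =>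
      ((l1 (e - a i) + ℓ / k ≤ l1 (x - a i)) ∧ ¬ l1 (x - a i) = l1 (e - a i) + ℓ / k)
        ∧ (a i).1 < e.1) := by
    ext i
    simp only [riCR, CR, bCR, Finset.mem_filter, Finset.mem_sdiff, Finset.mem_univ, true_and]
  have hs7 : ((bCR a ℓ k e x) \ Q2 a x).filter (fun j => e.1 < (a j).1) = univ.filter (fun i =>
      ((l1 (x - a i) = l1 (e - a i) + ℓ / k) ∧ ¬ ((a i).1 < x.1 ∧ x.2 ≤ (a i).2))
        ∧ e.1 < (a i).1) := by
    ext i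
    simp only [bCR, Q2, Finset.mem_filter, Finset.mem_sdiff, Finset.mem_univ, true_and]
  have hs8 : ((bCR a ℓ k e x) \ Q2 a x).filter (fun j => (a j).1 < e.1) = univ.filter (fun i =>
      ((l1 (x - a i) = l1 (e - a i) + ℓ / k) ∧ ¬ ((a i).1 < x.1 ∧ x.2 ≤ (a i).2))
        ∧ (a i).1 < e.1) := by
    ext i
    simp only [bCR, Q2, Finset.mem_filter, Finset.mem_sdiff, Finset.mem_univ, true_and]
  -- combinatorial identities
  have hcomb1 : (∑ i, ω i * coefL (a i) x e ℓ k) =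
      w1 a ω ℓ k e x - w2 a ω ℓ k e x - w3 a ω ℓ k e x + w4 a ω ℓ k e x
        + wP1 a ω ℓ k e x - wM1 a ω ℓ k e x + wDP1 a ω ℓ k e x - wDM1 a ω ℓ k e x := by
    simp only [w1, w2, w3, w4, wP1, wM1, wDP1, wDM1, hs1, hs2, hs3, hs4, hs5, hs6, hs7, hs8,
      Finset.sum_filter]
    simp only [← Finset.sum_sub_distrib, ← Finset.sum_add_distrib]
    refine Finset.sum_congr rfl fun i _ => ?_
    simp only [coefL]
    exact pointwiseL (ω i) (l1 (x - a i)) (l1 (e - a i) + ℓ / k) x.1 x.2 e.1 (a i).1 (a i).2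
      (hne i).1 (hne i).2 hxe (hQ3CR i)
  have hcomb2 : (∑ i, ω i * coefR (a i) x e ℓ k) =
      -(w1 a ω ℓ k e x) + w2 a ω ℓ k e x + w3 a ω ℓ k e x - w4 a ω ℓ k e x
        - wP1 a ω ℓ k e x + wM1 a ω ℓ k e x - wDP1 a ω ℓ k e x - wDM1 a ω ℓ k e x := by
    simp only [w1, w2, w3, w4, wP1, wM1, wDP1, wDM1, hs1, hs2, hs3, hs4, hs5, hs6, hs7, hs8,
      Finset.sum_filter]
    simp only [← Finset.sum_sub_distrib, ← Finset.sum_add_distrib, ← Finset.sum_neg_distrib]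
    refine Finset.sum_congr rfl fun i _ => ?_
    simp only [coefR]
    exact pointwiseR (ω i) (l1 (x - a i)) (l1 (e - a i) + ℓ / k) x.1 x.2 e.1 (a i).1 (a i).2
      (hne i).1 (hne i).2 hxe (hQ3CR i)
  constructor
  · have main : fObj a ω ℓ k (e + (-lam, 0)) (x + (-lam, 0)) - fObj a ω ℓ k e x
        = lam * ∑ i, ω i * coefL (a i) x e ℓ k := by
      simp only [fObj]
      rw [← Finset.sum_sub_distrib, Finset.mul_sum]
      refine Finset.sum_congr rfl fun i _ => ?_
      rw [← mul_sub, hKey1 i]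
      ring
    rw [main, hcomb1]
  · have main : fObj a ω ℓ k (e + (lam, 0)) (x + (lam, 0)) - fObj a ω ℓ k e x
        = lam * ∑ i, ω i * coefR (a i) x e ℓ k := by
      simp only [fObj]
      rw [← Finset.sum_sub_distrib, Finset.mul_sum]
      refine Finset.sum_congr rfl fun i _ => ?_
      rw [← mul_sub, hKey2 i]
      ring
    rw [main, hcomb2]
end

section
/- Let ℓ>0 and 0<θ'<θ<θ''≤π/2, and set λ₁=ℓ(cos θ'−cos θ), β₁=ℓ(sin θ−sin θ'), λ₂=ℓ(cos θ−cos θ''), β₂=ℓ(sin θ''−sin θ). If λ₁=λ₂ then β₂<β₁, and if β₁=β₂ then λ₂>λ₁. -/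
open Real

/-- Proposition 2.1 i): if λ₁ = λ₂ then β₂ < β₁, and if β₁ = β₂ then λ₂ > λ₁, where
λ₁ = ℓ(cos θ'−cos θ), β₁ = ℓ(sin θ−sin θ'), λ₂ = ℓ(cos θ−cos θ''), β₂ = ℓ(sin θ''−sin θ). -/
theorem displacement_monotonicity (ℓ θ θ' θ'' : ℝ) (hℓ : 0 < ℓ)
    (h1 : 0 < θ') (h2 : θ' < θ) (h3 : θ < θ'') (h4 : θ'' ≤ π / 2) :
    (ℓ * (cos θ' - cos θ) = ℓ * (cos θ - cos θ'') →
      ℓ * (sin θ'' - sin θ) < ℓ * (sin θ - sin θ')) ∧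
    (ℓ * (sin θ - sin θ') = ℓ * (sin θ'' - sin θ) →
      ℓ * (cos θ' - cos θ) < ℓ * (cos θ - cos θ'')) := by
  have hpi := Real.pi_pos
  have hs1 : 0 < sin θ' := Real.sin_pos_of_pos_of_lt_pi h1 (by linarith)
  have hs2 : 0 < sin θ := Real.sin_pos_of_pos_of_lt_pi (by linarith) (by linarith)
  have hs3 : 0 < sin θ'' := Real.sin_pos_of_pos_of_lt_pi (by linarith) (by linarith)
  have hc1 : 0 < cos θ' := Real.cos_pos_of_mem_Ioo ⟨by linarith, by linarith⟩
  have hc2 : 0 < cos θ := Real.cos_pos_of_mem_Ioo ⟨by linarith, by linarith⟩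
  have hc3 : 0 ≤ cos θ'' := Real.cos_nonneg_of_mem_Icc ⟨by linarith, h4⟩
  have hlt : cos (θ'' - θ') < 1 := by
    have h0 : 0 < θ'' - θ' := by linarith
    have := Real.cos_lt_cos_of_nonneg_of_le_pi (le_refl 0) (by linarith) h0
    simpa using this
  have hsum : (cos θ' + cos θ'')^2 + (sin θ' + sin θ'')^2 = 2 + 2 * cos (θ'' - θ') := by
    have e := Real.cos_sub θ'' θ'
    have p1 := Real.sin_sq_add_cos_sq θ'
    have p2 := Real.sin_sq_add_cos_sq θ''
    nlinarith [e, p1, p2]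
  have p := Real.sin_sq_add_cos_sq θ
  constructor
  · intro h
    have hab : cos θ' + cos θ'' = 2 * cos θ := by
      have := mul_left_cancel₀ hℓ.ne' h; linarith
    rw [mul_lt_mul_iff_right₀ hℓ]
    nlinarith [hsum, hlt, p, hs1, hs2, hs3]
  · intro h
    have hab : sin θ' + sin θ'' = 2 * sin θ := by
      have := mul_left_cancel₀ hℓ.ne' h; linarith
    rw [mul_lt_mul_iff_right₀ hℓ]
    nlinarith [hsum, hlt, p, hc1, hc2, hc3]
end

section
/- Under the diagonal-perturbation setup, f(e',x')−f(e,x) ≤ ω^a λ₁ + ω^b β₁ and f(e'',x'')−f(e,x) ≤ −ω^a λ₂ − ω^b β₂; equivalently, there exist d', d'' ≤ 0 with f(e',x')−f(e,x) = ω^a λ₁ + ω^b β₁ + d' and f(e'',x'')−f(e,x) = −ω^a λ₂ − ω^b β₂ + d''. -/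
open Real Finset
open scoped Classical

set_option maxHeartbeats 4000000 in
/-- Lemma 2.1: under the diagonal perturbation of the segment,
f(e',x')−f(e,x) ≤ ω^a λ₁ + ω^b β₁ and f(e'',x'')−f(e,x) ≤ −ω^a λ₂ − ω^b β₂
(i.e. the differences equal these quantities up to nonpositive terms d', d''). -/
theorem diagonal_perturbation_delta {M : ℕ} (a : Fin M → ℝ × ℝ) (ω : Fin M → ℝ)
    (ℓ k : ℝ) (hℓ : 0 < ℓ) (hk : 1 ≤ k) (hω : ∀ i, 0 < ω i)
    (e x : ℝ × ℝ) (θ : ℝ) (hθ : θ ∈ Set.Ioo 0 (π / 2))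
    (hdir : e - x = (ℓ * Real.cos θ, ℓ * Real.sin θ))
    (hx1 : x.1 ≤ 0) (he1 : 0 ≤ e.1) (hx2 : x.2 ≤ 0) (he2 : 0 ≤ e.2)
    (hne : ∀ i, (a i).1 ≠ x.1 ∧ (a i).2 ≠ e.2)
    (θ' θ'' : ℝ) (h1 : 0 < θ') (h2 : θ' < θ) (h3 : θ < θ'') (h4 : θ'' ≤ π / 2)
    (lam1 beta1 lam2 beta2 : ℝ)
    (hl1 : lam1 = ℓ * (Real.cos θ' - Real.cos θ))
    (hb1 : beta1 = ℓ * (Real.sin θ - Real.sin θ'))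
    (hl2 : lam2 = ℓ * (Real.cos θ - Real.cos θ''))
    (hb2 : beta2 = ℓ * (Real.sin θ'' - Real.sin θ))
    (x' e' x'' e'' : ℝ × ℝ)
    (hx' : x' = x + (-lam1, 0)) (he' : e' = e + (0, -beta1))
    (hx'' : x'' = x + (lam2, 0)) (he'' : e'' = e + (0, beta2))
    (hCR' : CR a ℓ k e' x' \ bCR a ℓ k e x = CR a ℓ k e x \ bCR a ℓ k e x)
    (hCR'' : CR a ℓ k e'' x'' \ bCR a ℓ k e x = CR a ℓ k e x \ bCR a ℓ k e x)
    (hQ1 : Q1 a x' = Q1 a x ∧ Q1 a x'' = Q1 a x)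
    (hQ2 : Q2 a x' = Q2 a x ∧ Q2 a x'' = Q2 a x)
    (hQ3 : Q3 a x' = Q3 a x ∧ Q3 a x'' = Q3 a x)
    (hQ4 : Q4 a x' = Q4 a x ∧ Q4 a x'' = Q4 a x)
    (hsep : ∀ i, ((a i).2 < e.2 → (a i).2 < e.2 - beta1) ∧
                 (e.2 < (a i).2 → e.2 + beta2 < (a i).2))
    :
    fObj a ω ℓ k e' x' - fObj a ω ℓ k e x ≤
      wA2 a ω ℓ k e x * lam1 + wB2 a ω ℓ k e x * beta1 ∧
    fObj a ω ℓ k e'' x'' - fObj a ω ℓ k e x ≤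
      -(wA2 a ω ℓ k e x * lam2) - wB2 a ω ℓ k e x * beta2 := by

  have hk0 : (0:ℝ) < k := lt_of_lt_of_le one_pos hk
  have hlk : 0 < ℓ / k := div_pos hℓ hk0
  have hπ := Real.pi_pos
  obtain ⟨hθ1, hθ2⟩ := hθ
  have hcθ : Real.cos θ < Real.cos θ' :=
    Real.cos_lt_cos_of_nonneg_of_le_pi h1.le (by linarith) h2
  have hcθ'' : Real.cos θ'' < Real.cos θ :=
    Real.cos_lt_cos_of_nonneg_of_le_pi (by linarith) (by linarith) h3
  have hsθ' : Real.sin θ' < Real.sin θ :=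
    Real.sin_lt_sin_of_lt_of_le_pi_div_two (by linarith) hθ2.le h2
  have hsθ'' : Real.sin θ < Real.sin θ'' :=
    Real.sin_lt_sin_of_lt_of_le_pi_div_two (by linarith) h4 h3
  have hl1nn : 0 ≤ lam1 := by rw [hl1]; exact mul_nonneg hℓ.le (by linarith)
  have hb1nn : 0 ≤ beta1 := by rw [hb1]; exact mul_nonneg hℓ.le (by linarith)
  have hl2nn : 0 ≤ lam2 := by rw [hl2]; exact mul_nonneg hℓ.le (by linarith)
  have hb2nn : 0 ≤ beta2 := by rw [hb2]; exact mul_nonneg hℓ.le (by linarith)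
  have hde1 : e.1 - x.1 = ℓ * Real.cos θ := by
    have := congrArg Prod.fst hdir; simpa using this
  have hde2 : e.2 - x.2 = ℓ * Real.sin θ := by
    have := congrArg Prod.snd hdir; simpa using this
  have hcos0 : 0 < Real.cos θ := Real.cos_pos_of_mem_Ioo ⟨by linarith, hθ2⟩
  have hsin0 : 0 < Real.sin θ := Real.sin_pos_of_pos_of_lt_pi hθ1 (by linarith)
  have hex1 : x.1 < e.1 := by have := mul_pos hℓ hcos0; linarith
  have hex2 : x.2 < e.2 := by have := mul_pos hℓ hsin0; linarith
  have hx'1 : x'.1 = x.1 - lam1 := by rw [hx']; simp; ring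
  have hx'2 : x'.2 = x.2 := by rw [hx']; simp
  have he'1 : e'.1 = e.1 := by rw [he']; simp
  have he'2 : e'.2 = e.2 - beta1 := by rw [he']; simp; ring
  have hx''1 : x''.1 = x.1 + lam2 := by rw [hx'']; simp
  have hx''2 : x''.2 = x.2 := by rw [hx'']; simp
  have he''1 : e''.1 = e.1 := by rw [he'']; simp
  have he''2 : e''.2 = e.2 + beta2 := by rw [he'']; simp
  -- Q3 ∩ CR = ∅
  have hQ3CR : ∀ i, (a i).1 < x.1 → (a i).2 < x.2 →
      ¬ (l1 (e - a i) + ℓ / k ≤ l1 (x - a i)) := by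
    intro i hi1 hi2 hle
    have e1 : |(e - a i).1| = e.1 - (a i).1 := by
      rw [Prod.fst_sub]; exact abs_of_nonneg (by linarith)
    have e2 : |(e - a i).2| = e.2 - (a i).2 := by
      rw [Prod.snd_sub]; exact abs_of_nonneg (by linarith)
    have e3 : |(x - a i).1| = x.1 - (a i).1 := by
      rw [Prod.fst_sub]; exact abs_of_nonneg (by linarith)
    have e4 : |(x - a i).2| = x.2 - (a i).2 := by
      rw [Prod.snd_sub]; exact abs_of_nonneg (by linarith)
    rw [l1, l1, e1, e2, e3, e4] at hle
    linarith
  -- sign-preservation facts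
  have hsl : ∀ i, (a i).1 < x.1 → (a i).1 < x.1 - lam1 := by
    intro i h
    rcases le_or_gt x.2 (a i).2 with h2 | h2
    · have hm : i ∈ Q2 a x := by
        simp only [Q2, Finset.mem_filter, Finset.mem_univ, true_and]; exact ⟨h, h2⟩
      rw [← hQ2.1] at hm
      simp only [Q2, Finset.mem_filter, Finset.mem_univ, true_and] at hm
      rw [hx'1] at hm; exact hm.1
    · have hm : i ∈ Q3 a x := by
        simp only [Q3, Finset.mem_filter, Finset.mem_univ, true_and]; exact ⟨h, h2⟩
      rw [← hQ3.1] at hm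
      simp only [Q3, Finset.mem_filter, Finset.mem_univ, true_and] at hm
      rw [hx'1] at hm; exact hm.1
  have hsr : ∀ i, x.1 < (a i).1 → x.1 + lam2 ≤ (a i).1 := by
    intro i h
    rcases le_or_gt x.2 (a i).2 with h2 | h2
    · have hm : i ∈ Q1 a x := by
        simp only [Q1, Finset.mem_filter, Finset.mem_univ, true_and]; exact ⟨h.le, h2⟩
      rw [← hQ1.2] at hm
      simp only [Q1, Finset.mem_filter, Finset.mem_univ, true_and] at hm
      rw [hx''1] at hm; exact hm.1
    · have hm : i ∈ Q4 a x := by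
        simp only [Q4, Finset.mem_filter, Finset.mem_univ, true_and]; exact ⟨h.le, h2⟩
      rw [← hQ4.2] at hm
      simp only [Q4, Finset.mem_filter, Finset.mem_univ, true_and] at hm
      rw [hx''1] at hm; exact hm.1
  -- how the l1 distances change under the perturbations
  have hA' : ∀ i, l1 (x' - a i) =
      l1 (x - a i) + (if x.1 ≤ (a i).1 then lam1 else -lam1) := by
    intro i
    have c1 : (x' - a i).1 = x.1 - lam1 - (a i).1 := by rw [Prod.fst_sub, hx'1]
    have c2 : (x' - a i).2 = x.2 - (a i).2 := by rw [Prod.snd_sub, hx'2]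
    rcases lt_or_gt_of_ne (hne i).1 with h | h
    · have hs := hsl i h
      rw [if_neg (not_le.mpr h), l1, l1, c1, c2, Prod.fst_sub, Prod.snd_sub,
        abs_of_nonneg (by linarith : (0:ℝ) ≤ x.1 - lam1 - (a i).1),
        abs_of_nonneg (by linarith : (0:ℝ) ≤ x.1 - (a i).1)]
      ring
    · rw [if_pos h.le, l1, l1, c1, c2, Prod.fst_sub, Prod.snd_sub,
        abs_of_nonpos (by linarith : x.1 - lam1 - (a i).1 ≤ 0),
        abs_of_nonpos (by linarith : x.1 - (a i).1 ≤ 0)]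
      ring
  have hB' : ∀ i, l1 (e' - a i) =
      l1 (e - a i) + (if e.2 < (a i).2 then beta1 else -beta1) := by
    intro i
    have c1 : (e' - a i).1 = e.1 - (a i).1 := by rw [Prod.fst_sub, he'1]
    have c2 : (e' - a i).2 = e.2 - beta1 - (a i).2 := by rw [Prod.snd_sub, he'2]
    rcases lt_or_gt_of_ne (hne i).2 with h | h
    · have hs := (hsep i).1 h
      rw [if_neg (not_lt.mpr h.le), l1, l1, c1, c2, Prod.fst_sub, Prod.snd_sub,
        abs_of_nonneg (by linarith : (0:ℝ) ≤ e.2 - beta1 - (a i).2),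
        abs_of_nonneg (by linarith : (0:ℝ) ≤ e.2 - (a i).2)]
      ring
    · rw [if_pos h, l1, l1, c1, c2, Prod.fst_sub, Prod.snd_sub,
        abs_of_nonpos (by linarith : e.2 - beta1 - (a i).2 ≤ 0),
        abs_of_nonpos (by linarith : e.2 - (a i).2 ≤ 0)]
      ring
  have hA'' : ∀ i, l1 (x'' - a i) =
      l1 (x - a i) - (if x.1 ≤ (a i).1 then lam2 else -lam2) := by
    intro i
    have c1 : (x'' - a i).1 = x.1 + lam2 - (a i).1 := by rw [Prod.fst_sub, hx''1]
    have c2 : (x'' - a i).2 = x.2 - (a i).2 := by rw [Prod.snd_sub, hx''2]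
    rcases lt_or_gt_of_ne (hne i).1 with h | h
    · rw [if_neg (not_le.mpr h), l1, l1, c1, c2, Prod.fst_sub, Prod.snd_sub,
        abs_of_nonneg (by linarith : (0:ℝ) ≤ x.1 + lam2 - (a i).1),
        abs_of_nonneg (by linarith : (0:ℝ) ≤ x.1 - (a i).1)]
      ring
    · have hs := hsr i h
      rw [if_pos h.le, l1, l1, c1, c2, Prod.fst_sub, Prod.snd_sub,
        abs_of_nonpos (by linarith : x.1 + lam2 - (a i).1 ≤ 0),
        abs_of_nonpos (by linarith : x.1 - (a i).1 ≤ 0)]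
      ring
  have hB'' : ∀ i, l1 (e'' - a i) =
      l1 (e - a i) - (if e.2 < (a i).2 then beta2 else -beta2) := by
    intro i
    have c1 : (e'' - a i).1 = e.1 - (a i).1 := by rw [Prod.fst_sub, he''1]
    have c2 : (e'' - a i).2 = e.2 + beta2 - (a i).2 := by rw [Prod.snd_sub, he''2]
    rcases lt_or_gt_of_ne (hne i).2 with h | h
    · rw [if_neg (not_lt.mpr h.le), l1, l1, c1, c2, Prod.fst_sub, Prod.snd_sub,
        abs_of_nonneg (by linarith : (0:ℝ) ≤ e.2 + beta2 - (a i).2),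
        abs_of_nonneg (by linarith : (0:ℝ) ≤ e.2 - (a i).2)]
      ring
    · have hs := (hsep i).2 h
      rw [if_pos h, l1, l1, c1, c2, Prod.fst_sub, Prod.snd_sub,
        abs_of_nonpos (by linarith : e.2 + beta2 - (a i).2 ≤ 0),
        abs_of_nonpos (by linarith : e.2 - (a i).2 ≤ 0)]
      ring
  -- the right-hand side as a single sum
  have hsum : ∀ u v : ℝ, wA2 a ω ℓ k e x * u + wB2 a ω ℓ k e x * v =
      ∑ i, (((if i ∈ Q1 a x \ CR a ℓ k e x then ω i else 0)
          - (if i ∈ Q2 a x \ riCR a ℓ k e x then ω i else 0)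
          - (if i ∈ Q3 a x then ω i else 0)
          + (if i ∈ Q4 a x \ CR a ℓ k e x then ω i else 0)) * u
        + ((if i ∈ (riCR a ℓ k e x).filter (fun j => e.2 < (a j).2) then ω i else 0)
          - (if i ∈ (riCR a ℓ k e x).filter (fun j => (a j).2 < e.2) then ω i else 0)
          + (if i ∈ ((bCR a ℓ k e x) \ Q2 a x).filter (fun j => e.2 < (a j).2) then ω i else 0)) * v) := by
    intro u v
    simp only [wA2, wB2, w1, w2, w3, w4, wP2, wM2, wDP2, sub_mul, add_mul, ite_mul, zero_mul,
      Finset.sum_add_distrib, Finset.sum_sub_distrib, Finset.sum_ite_mem, Finset.univ_inter,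
      ← Finset.sum_mul]
    try ring
  constructor
  · rw [hsum lam1 beta1, fObj, fObj, ← Finset.sum_sub_distrib]
    refine Finset.sum_le_sum ?_
    intro i _
    have hA'i := hA' i
    have hB'i := hB' i
    have m1 := min_le_left (l1 (x' - a i)) (l1 (e' - a i) + ℓ / k)
    have m2 := min_le_right (l1 (x' - a i)) (l1 (e' - a i) + ℓ / k)
    have hwi := (hω i).le
    simp only [riCR, Finset.mem_sdiff, CR, bCR, Q1, Q2, Q3, Q4,
      Finset.mem_filter, Finset.mem_univ, true_and]
    by_cases hCRi : l1 (e - a i) + ℓ / k ≤ l1 (x - a i)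
    · have hmin : min (l1 (x - a i)) (l1 (e - a i) + ℓ / k) = l1 (e - a i) + ℓ / k :=
        min_eq_right hCRi
      by_cases hbi : l1 (x - a i) = l1 (e - a i) + ℓ / k
      · rcases lt_or_gt_of_ne (hne i).1 with hc1 | hc1
        · rcases le_or_gt x.2 (a i).2 with hc2 | hc2
          · -- Q2 ∩ bCR
            have key : min (l1 (x' - a i)) (l1 (e' - a i) + ℓ / k) -
                min (l1 (x - a i)) (l1 (e - a i) + ℓ / k) ≤ -lam1 := by
              have hv : l1 (x' - a i) = l1 (x - a i) + -lam1 := by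
                rw [hA'i, if_neg (not_le.mpr hc1)]
              rw [hmin]; linarith [m1, hv]
            have keyw := mul_le_mul_of_nonneg_left key hwi
            rw [mul_sub, hmin] at keyw; rw [hmin]
            simp [hc1, hc2, not_le.mpr hc1, not_lt.mpr hc2, eq_true hbi, hCRi]
            linarith [keyw]
          · exact absurd hCRi (hQ3CR i hc1 hc2)
        · have hc2 : x.2 ≤ (a i).2 ∨ (a i).2 < x.2 := le_or_gt x.2 (a i).2
          rcases lt_or_gt_of_ne (hne i).2 with hd | hd
          · -- x₁ < a₁, a₂ < e₂ : contribution 0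
            have key : min (l1 (x' - a i)) (l1 (e' - a i) + ℓ / k) -
                min (l1 (x - a i)) (l1 (e - a i) + ℓ / k) ≤ -beta1 := by
              have hv : l1 (e' - a i) = l1 (e - a i) + -beta1 := by
                rw [hB'i, if_neg (not_lt.mpr hd.le)]
              rw [hmin]; linarith [m2, hv]
            have keyw := mul_le_mul_of_nonneg_left key hwi
            rw [mul_sub, hmin] at keyw; rw [hmin]
            simp [hc1.le, not_lt.mpr hc1.le, eq_true hbi, hCRi, not_lt.mpr hd.le]
            linarith [keyw, mul_nonneg hwi hb1nn]
          · -- x₁ < a₁, e₂ < a₂ : contribution ω β₁ (wDP2)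
            have hxa2 : x.2 ≤ (a i).2 := by linarith
            have key : min (l1 (x' - a i)) (l1 (e' - a i) + ℓ / k) -
                min (l1 (x - a i)) (l1 (e - a i) + ℓ / k) ≤ beta1 := by
              have hv : l1 (e' - a i) = l1 (e - a i) + beta1 := by
                rw [hB'i, if_pos hd]
              rw [hmin]; linarith [m2, hv]
            have keyw := mul_le_mul_of_nonneg_left key hwi
            rw [mul_sub, hmin] at keyw; rw [hmin]
            simp [hc1.le, not_lt.mpr hc1.le, eq_true hbi, hCRi, hd, hxa2, not_lt.mpr hxa2]
            linarith [keyw]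
      · -- riCR
        have hQ3f : ¬((a i).1 < x.1 ∧ (a i).2 < x.2) := fun h => hQ3CR i h.1 h.2 hCRi
        rcases lt_or_gt_of_ne (hne i).2 with hd | hd
        · -- a₂ < e₂ : contribution -ω β₁
          have key : min (l1 (x' - a i)) (l1 (e' - a i) + ℓ / k) -
              min (l1 (x - a i)) (l1 (e - a i) + ℓ / k) ≤ -beta1 := by
            have hv : l1 (e' - a i) = l1 (e - a i) + -beta1 := by
              rw [hB'i, if_neg (not_lt.mpr hd.le)]
            rw [hmin]; linarith [m2, hv]
          have keyw := mul_le_mul_of_nonneg_left key hwi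
          rw [mul_sub, hmin] at keyw; rw [hmin]
          simp [hCRi, hbi, hQ3f, not_lt.mpr hd.le, hd]
          linarith [keyw]
        · -- e₂ < a₂ : contribution ω β₁
          have key : min (l1 (x' - a i)) (l1 (e' - a i) + ℓ / k) -
              min (l1 (x - a i)) (l1 (e - a i) + ℓ / k) ≤ beta1 := by
            have hv : l1 (e' - a i) = l1 (e - a i) + beta1 := by
              rw [hB'i, if_pos hd]
            rw [hmin]; linarith [m2, hv]
          have keyw := mul_le_mul_of_nonneg_left key hwi
          rw [mul_sub, hmin] at keyw; rw [hmin]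
          simp [hCRi, hbi, hQ3f, hd, not_lt.mpr hd.le]
          linarith [keyw]
    · -- not in CR
      have hAB : l1 (x - a i) < l1 (e - a i) + ℓ / k := not_le.mp hCRi
      have hmin : min (l1 (x - a i)) (l1 (e - a i) + ℓ / k) = l1 (x - a i) :=
        min_eq_left hAB.le
      have hbif : ¬(l1 (x - a i) = l1 (e - a i) + ℓ / k) := fun h => hCRi h.ge
      rcases lt_or_gt_of_ne (hne i).1 with hc1 | hc1
      · -- a₁ < x₁ : contribution -ω λ₁
        have key : min (l1 (x' - a i)) (l1 (e' - a i) + ℓ / k) -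
            min (l1 (x - a i)) (l1 (e - a i) + ℓ / k) ≤ -lam1 := by
          have hv : l1 (x' - a i) = l1 (x - a i) + -lam1 := by
            rw [hA'i, if_neg (not_le.mpr hc1)]
          rw [hmin]; linarith [m1, hv]
        have keyw := mul_le_mul_of_nonneg_left key hwi
        rw [mul_sub, hmin] at keyw; rw [hmin]
        rcases le_or_gt x.2 (a i).2 with hc2 | hc2
        · simp [hCRi, hbif, hc1, hc2, not_le.mpr hc1, not_lt.mpr hc2]
          linarith [keyw]
        · simp [hCRi, hbif, hc1, hc2, not_le.mpr hc1, not_le.mpr hc2]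
          linarith [keyw]
      · -- x₁ < a₁ : contribution ω λ₁
        have key : min (l1 (x' - a i)) (l1 (e' - a i) + ℓ / k) -
            min (l1 (x - a i)) (l1 (e - a i) + ℓ / k) ≤ lam1 := by
          have hv : l1 (x' - a i) = l1 (x - a i) + lam1 := by
            rw [hA'i, if_pos hc1.le]
          rw [hmin]; linarith [m1, hv]
        have keyw := mul_le_mul_of_nonneg_left key hwi
        rw [mul_sub, hmin] at keyw; rw [hmin]
        rcases le_or_gt x.2 (a i).2 with hc2 | hc2
        · simp [hCRi, hbif, hc1.le, hc2, not_lt.mpr hc1.le, not_lt.mpr hc2]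
          linarith [keyw]
        · simp [hCRi, hbif, hc1.le, hc2, not_lt.mpr hc1.le, not_le.mpr hc2]
          linarith [keyw]
  · have hrw : -(wA2 a ω ℓ k e x * lam2) - wB2 a ω ℓ k e x * beta2
        = wA2 a ω ℓ k e x * (-lam2) + wB2 a ω ℓ k e x * (-beta2) := by ring
    rw [hrw, hsum (-lam2) (-beta2), fObj, fObj, ← Finset.sum_sub_distrib]
    refine Finset.sum_le_sum ?_
    intro i _
    have hA''i := hA'' i
    have hB''i := hB'' i
    have m1 := min_le_left (l1 (x'' - a i)) (l1 (e'' - a i) + ℓ / k)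
    have m2 := min_le_right (l1 (x'' - a i)) (l1 (e'' - a i) + ℓ / k)
    have hwi := (hω i).le
    simp only [riCR, Finset.mem_sdiff, CR, bCR, Q1, Q2, Q3, Q4,
      Finset.mem_filter, Finset.mem_univ, true_and]
    by_cases hCRi : l1 (e - a i) + ℓ / k ≤ l1 (x - a i)
    · have hmin : min (l1 (x - a i)) (l1 (e - a i) + ℓ / k) = l1 (e - a i) + ℓ / k :=
        min_eq_right hCRi
      by_cases hbi : l1 (x - a i) = l1 (e - a i) + ℓ / k
      · rcases lt_or_gt_of_ne (hne i).1 with hc1 | hc1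
        · rcases le_or_gt x.2 (a i).2 with hc2 | hc2
          · -- Q2 ∩ bCR : contribution +ω λ₂
            have key : min (l1 (x'' - a i)) (l1 (e'' - a i) + ℓ / k) -
                min (l1 (x - a i)) (l1 (e - a i) + ℓ / k) ≤ lam2 := by
              have hv : l1 (x'' - a i) = l1 (x - a i) - -lam2 := by
                rw [hA''i, if_neg (not_le.mpr hc1)]
              rw [hmin]; linarith [m1, hv]
            have keyw := mul_le_mul_of_nonneg_left key hwi
            rw [mul_sub, hmin] at keyw; rw [hmin]
            simp [hc1, hc2, not_le.mpr hc1, not_lt.mpr hc2, eq_true hbi, hCRi]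
            linarith [keyw]
          · exact absurd hCRi (hQ3CR i hc1 hc2)
        · rcases lt_or_gt_of_ne (hne i).2 with hd | hd
          · -- x₁ < a₁, a₂ < e₂ : contribution 0
            have key : min (l1 (x'' - a i)) (l1 (e'' - a i) + ℓ / k) -
                min (l1 (x - a i)) (l1 (e - a i) + ℓ / k) ≤ -lam2 := by
              have hv : l1 (x'' - a i) = l1 (x - a i) - lam2 := by
                rw [hA''i, if_pos hc1.le]
              rw [hmin]; linarith [m1, hv]
            have keyw := mul_le_mul_of_nonneg_left key hwi
            rw [mul_sub, hmin] at keyw; rw [hmin]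
            simp [hc1.le, not_lt.mpr hc1.le, eq_true hbi, hCRi, not_lt.mpr hd.le]
            linarith [keyw, mul_nonneg hwi hl2nn]
          · -- x₁ < a₁, e₂ < a₂ : contribution -ω β₂ (wDP2)
            have hxa2 : x.2 ≤ (a i).2 := by linarith
            have key : min (l1 (x'' - a i)) (l1 (e'' - a i) + ℓ / k) -
                min (l1 (x - a i)) (l1 (e - a i) + ℓ / k) ≤ -beta2 := by
              have hv : l1 (e'' - a i) = l1 (e - a i) - beta2 := by
                rw [hB''i, if_pos hd]
              rw [hmin]; linarith [m2, hv]
            have keyw := mul_le_mul_of_nonneg_left key hwi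
            rw [mul_sub, hmin] at keyw; rw [hmin]
            simp [hc1.le, not_lt.mpr hc1.le, eq_true hbi, hCRi, hd, hxa2, not_lt.mpr hxa2]
            linarith [keyw]
      · -- riCR
        have hQ3f : ¬((a i).1 < x.1 ∧ (a i).2 < x.2) := fun h => hQ3CR i h.1 h.2 hCRi
        rcases lt_or_gt_of_ne (hne i).2 with hd | hd
        · -- a₂ < e₂ : contribution +ω β₂
          have key : min (l1 (x'' - a i)) (l1 (e'' - a i) + ℓ / k) -
              min (l1 (x - a i)) (l1 (e - a i) + ℓ / k) ≤ beta2 := by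
            have hv : l1 (e'' - a i) = l1 (e - a i) - -beta2 := by
              rw [hB''i, if_neg (not_lt.mpr hd.le)]
            rw [hmin]; linarith [m2, hv]
          have keyw := mul_le_mul_of_nonneg_left key hwi
          rw [mul_sub, hmin] at keyw; rw [hmin]
          simp [hCRi, hbi, hQ3f, not_lt.mpr hd.le, hd]
          linarith [keyw]
        · -- e₂ < a₂ : contribution -ω β₂
          have key : min (l1 (x'' - a i)) (l1 (e'' - a i) + ℓ / k) -
              min (l1 (x - a i)) (l1 (e - a i) + ℓ / k) ≤ -beta2 := by
            have hv : l1 (e'' - a i) = l1 (e - a i) - beta2 := by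
              rw [hB''i, if_pos hd]
            rw [hmin]; linarith [m2, hv]
          have keyw := mul_le_mul_of_nonneg_left key hwi
          rw [mul_sub, hmin] at keyw; rw [hmin]
          simp [hCRi, hbi, hQ3f, hd, not_lt.mpr hd.le]
          linarith [keyw]
    · -- not in CR
      have hAB : l1 (x - a i) < l1 (e - a i) + ℓ / k := not_le.mp hCRi
      have hmin : min (l1 (x - a i)) (l1 (e - a i) + ℓ / k) = l1 (x - a i) :=
        min_eq_left hAB.le
      have hbif : ¬(l1 (x - a i) = l1 (e - a i) + ℓ / k) := fun h => hCRi h.ge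
      rcases lt_or_gt_of_ne (hne i).1 with hc1 | hc1
      · -- a₁ < x₁ : contribution +ω λ₂
        have key : min (l1 (x'' - a i)) (l1 (e'' - a i) + ℓ / k) -
            min (l1 (x - a i)) (l1 (e - a i) + ℓ / k) ≤ lam2 := by
          have hv : l1 (x'' - a i) = l1 (x - a i) - -lam2 := by
            rw [hA''i, if_neg (not_le.mpr hc1)]
          rw [hmin]; linarith [m1, hv]
        have keyw := mul_le_mul_of_nonneg_left key hwi
        rw [mul_sub, hmin] at keyw; rw [hmin]
        rcases le_or_gt x.2 (a i).2 with hc2 | hc2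
        · simp [hCRi, hbif, hc1, hc2, not_le.mpr hc1, not_lt.mpr hc2]
          linarith [keyw]
        · simp [hCRi, hbif, hc1, hc2, not_le.mpr hc1, not_le.mpr hc2]
          linarith [keyw]
      · -- x₁ < a₁ : contribution -ω λ₂
        have key : min (l1 (x'' - a i)) (l1 (e'' - a i) + ℓ / k) -
            min (l1 (x - a i)) (l1 (e - a i) + ℓ / k) ≤ -lam2 := by
          have hv : l1 (x'' - a i) = l1 (x - a i) - lam2 := by
            rw [hA''i, if_pos hc1.le]
          rw [hmin]; linarith [m1, hv]
        have keyw := mul_le_mul_of_nonneg_left key hwi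
        rw [mul_sub, hmin] at keyw; rw [hmin]
        rcases le_or_gt x.2 (a i).2 with hc2 | hc2
        · simp [hCRi, hbif, hc1.le, hc2, not_lt.mpr hc1.le, not_lt.mpr hc2]
          linarith [keyw]
        · simp [hCRi, hbif, hc1.le, hc2, not_lt.mpr hc1.le, not_le.mpr hc2]
          linarith [keyw]
end

section
/- Under the diagonal-perturbation setup, if in addition θ''≤π/4 and ∂CR_{e,x}∩C_x²(A)=∅, then f(e',x')−f(e,x) = (ω¹−ω²−ω³+ω⁴)λ₁ + (ω⁺−ω⁻)β₁ + ω^{δ+}λ₁ − ω^{δ−}β₁ and f(e'',x'')−f(e,x) = −(ω¹−ω²−ω³+ω⁴)λ₂ − (ω⁺−ω⁻)β₂ − ω^{δ+}β₂ − ω^{δ−}λ₂. -/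
open Real Finset
open scoped Classical

lemma trig_mono {α β : ℝ} (h0 : 0 ≤ α) (hab : α ≤ β) (hb : β ≤ π/4) :
    Real.cos α + Real.sin α ≤ Real.cos β + Real.sin β := by
  have hpi := Real.pi_pos
  have h1 : α + π/4 ∈ Set.Icc (-(π/2)) (π/2) := by constructor <;> nlinarith
  have h2 : β + π/4 ∈ Set.Icc (-(π/2)) (π/2) := by constructor <;> nlinarith
  have hm := Real.strictMonoOn_sin.monotoneOn h1 h2 (by linarith)
  rw [Real.sin_add, Real.sin_add, Real.sin_pi_div_four, Real.cos_pi_div_four] at hm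
  have hs : (0:ℝ) < Real.sqrt 2 / 2 := by positivity
  nlinarith [hm]

lemma sum_mul_ite {M : ℕ} (S : Finset (Fin M)) (ω : Fin M → ℝ) (c : ℝ) :
    (∑ j ∈ S, ω j) * c = ∑ i, if i ∈ S then ω i * c else 0 := by
  rw [Finset.sum_mul]; simp [Finset.sum_ite_mem]

set_option maxHeartbeats 1000000 in
/-- Lemma 2.1, case (a) θ' < θ < θ'' ≤ π/4 (with no boundary points of the captation
region in C_x²(A)): the exact change of the objective under the diagonal perturbations. -/
theorem diagonal_perturbation_delta_steep {M : ℕ} (a : Fin M → ℝ × ℝ) (ω : Fin M → ℝ)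
    (ℓ k : ℝ) (hℓ : 0 < ℓ) (hk : 1 ≤ k) (hω : ∀ i, 0 < ω i)
    (e x : ℝ × ℝ) (θ : ℝ) (hθ : θ ∈ Set.Ioo 0 (π / 2))
    (hdir : e - x = (ℓ * Real.cos θ, ℓ * Real.sin θ))
    (hx1 : x.1 ≤ 0) (he1 : 0 ≤ e.1) (hx2 : x.2 ≤ 0) (he2 : 0 ≤ e.2)
    (hne : ∀ i, (a i).1 ≠ x.1 ∧ (a i).2 ≠ e.2)
    (θ' θ'' : ℝ) (h1 : 0 < θ') (h2 : θ' < θ) (h3 : θ < θ'') (h4 : θ'' ≤ π / 2)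
    (lam1 beta1 lam2 beta2 : ℝ)
    (hl1 : lam1 = ℓ * (Real.cos θ' - Real.cos θ))
    (hb1 : beta1 = ℓ * (Real.sin θ - Real.sin θ'))
    (hl2 : lam2 = ℓ * (Real.cos θ - Real.cos θ''))
    (hb2 : beta2 = ℓ * (Real.sin θ'' - Real.sin θ))
    (x' e' x'' e'' : ℝ × ℝ)
    (hx' : x' = x + (-lam1, 0)) (he' : e' = e + (0, -beta1))
    (hx'' : x'' = x + (lam2, 0)) (he'' : e'' = e + (0, beta2))
    (hCR' : CR a ℓ k e' x' \ bCR a ℓ k e x = CR a ℓ k e x \ bCR a ℓ k e x)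
    (hCR'' : CR a ℓ k e'' x'' \ bCR a ℓ k e x = CR a ℓ k e x \ bCR a ℓ k e x)
    (hQ1 : Q1 a x' = Q1 a x ∧ Q1 a x'' = Q1 a x)
    (hQ2 : Q2 a x' = Q2 a x ∧ Q2 a x'' = Q2 a x)
    (hQ3 : Q3 a x' = Q3 a x ∧ Q3 a x'' = Q3 a x)
    (hQ4 : Q4 a x' = Q4 a x ∧ Q4 a x'' = Q4 a x)
    (hsep : ∀ i, ((a i).2 < e.2 → (a i).2 < e.2 - beta1) ∧
                 (e.2 < (a i).2 → e.2 + beta2 < (a i).2))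
    (h5 : θ'' ≤ π / 4)
    (hbQ2 : bCR a ℓ k e x ∩ Q2 a x = ∅) :
    fObj a ω ℓ k e' x' - fObj a ω ℓ k e x =
      (w1 a ω ℓ k e x - w2 a ω ℓ k e x - w3 a ω ℓ k e x + w4 a ω ℓ k e x) * lam1
        + (wP2 a ω ℓ k e x - wM2 a ω ℓ k e x) * beta1
        + wDP2 a ω ℓ k e x * lam1 - wDM2 a ω ℓ k e x * beta1 ∧
    fObj a ω ℓ k e'' x'' - fObj a ω ℓ k e x =
      -((w1 a ω ℓ k e x - w2 a ω ℓ k e x - w3 a ω ℓ k e x + w4 a ω ℓ k e x) * lam2)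
        - (wP2 a ω ℓ k e x - wM2 a ω ℓ k e x) * beta2
        - wDP2 a ω ℓ k e x * beta2 - wDM2 a ω ℓ k e x * lam2 := by
  
  obtain ⟨hθ0, hθπ⟩ := hθ
  have hpi := Real.pi_pos
  have hk0 : (0:ℝ) < k := lt_of_lt_of_le one_pos hk
  have hlk : 0 < ℓ / k := div_pos hℓ hk0
  have hθ4 : θ < π/4 := lt_of_lt_of_le h3 h5
  -- nonnegativity and comparisons of lam/beta
  have hcos1 : Real.cos θ ≤ Real.cos θ' :=
    Real.cos_le_cos_of_nonneg_of_le_pi (le_of_lt h1) (by linarith) (le_of_lt h2)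
  have hcos2 : Real.cos θ'' ≤ Real.cos θ :=
    Real.cos_le_cos_of_nonneg_of_le_pi (by linarith) (by linarith) (le_of_lt h3)
  have hsin1 : Real.sin θ' ≤ Real.sin θ := by
    have := Real.strictMonoOn_sin.monotoneOn (a := θ') (b := θ)
      ⟨by linarith, by linarith⟩ ⟨by linarith, by linarith⟩ (le_of_lt h2)
    exact this
  have hsin2 : Real.sin θ ≤ Real.sin θ'' := by
    have := Real.strictMonoOn_sin.monotoneOn (a := θ) (b := θ'')
      ⟨by linarith, by linarith⟩ ⟨by linarith, by linarith⟩ (le_of_lt h3)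
    exact this
  have hl1nn : 0 ≤ lam1 := by rw [hl1]; nlinarith
  have hb1nn : 0 ≤ beta1 := by rw [hb1]; nlinarith
  have hl2nn : 0 ≤ lam2 := by rw [hl2]; nlinarith
  have hb2nn : 0 ≤ beta2 := by rw [hb2]; nlinarith
  have hlb1 : lam1 ≤ beta1 := by
    have := trig_mono (le_of_lt h1) (le_of_lt h2) (le_of_lt hθ4)
    rw [hl1, hb1]; nlinarith
  have hlb2 : lam2 ≤ beta2 := by
    have := trig_mono (by linarith : (0:ℝ) ≤ θ) (le_of_lt h3) h5
    rw [hl2, hb2]; nlinarith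
  -- coordinates of perturbed points
  have hx'1 : x'.1 = x.1 - lam1 := by rw [hx', Prod.fst_add]; ring_nf
  have hx'2 : x'.2 = x.2 := by rw [hx', Prod.snd_add]; simp
  have he'1 : e'.1 = e.1 := by rw [he', Prod.fst_add]; simp
  have he'2 : e'.2 = e.2 - beta1 := by rw [he', Prod.snd_add]; ring_nf
  have hx''1 : x''.1 = x.1 + lam2 := by rw [hx'', Prod.fst_add]
  have hx''2 : x''.2 = x.2 := by rw [hx'', Prod.snd_add]; simp
  have he''1 : e''.1 = e.1 := by rw [he'', Prod.fst_add]; simp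
  have he''2 : e''.2 = e.2 + beta2 := by rw [he'', Prod.snd_add]
  have hd1 : e.1 - x.1 = ℓ * Real.cos θ := by
    have := congrArg Prod.fst hdir; simpa using this
  have hd2 : e.2 - x.2 = ℓ * Real.sin θ := by
    have := congrArg Prod.snd hdir; simpa using this
  have hex1 : x.1 < e.1 := by
    have hc : 0 < Real.cos θ := Real.cos_pos_of_mem_Ioo ⟨by linarith, hθπ⟩
    nlinarith
  have hex2 : x.2 < e.2 := by
    have hs : 0 < Real.sin θ := Real.sin_pos_of_pos_of_lt_pi hθ0 (by linarith)
    nlinarith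
  -- l1 expansions
  have l1g : ∀ (p : ℝ × ℝ) i, l1 (p - a i) = |p.1 - (a i).1| + |p.2 - (a i).2| := by
    intro p i; simp [l1]
  have l1x' : ∀ i, l1 (x' - a i) = |x.1 - lam1 - (a i).1| + |x.2 - (a i).2| := by
    intro i; rw [l1g, hx'1, hx'2]
  have l1e' : ∀ i, l1 (e' - a i) = |e.1 - (a i).1| + |e.2 - beta1 - (a i).2| := by
    intro i; rw [l1g, he'1, he'2]
  have l1x'' : ∀ i, l1 (x'' - a i) = |x.1 + lam2 - (a i).1| + |x.2 - (a i).2| := by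
    intro i; rw [l1g, hx''1, hx''2]
  have l1e'' : ∀ i, l1 (e'' - a i) = |e.1 - (a i).1| + |e.2 + beta2 - (a i).2| := by
    intro i; rw [l1g, he''1, he''2]
  -- quadrant stability in the first coordinate
  have hF1' : ∀ i, (x.1 ≤ (a i).1 ↔ x'.1 ≤ (a i).1) := by
    intro i
    by_cases h : x.2 ≤ (a i).2
    · constructor
      · intro hx
        have hm : i ∈ Q1 a x := by simp [Q1, hx, h]
        rw [← hQ1.1] at hm
        simp [Q1] at hm; exact hm.1
      · intro hx
        have hm : i ∈ Q1 a x' := by simp [Q1, hx, hx'2, h]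
        rw [hQ1.1] at hm
        simp [Q1] at hm; exact hm.1
    · have h' : (a i).2 < x.2 := not_le.mp h
      constructor
      · intro hx
        have hm : i ∈ Q4 a x := by simp [Q4, hx, h']
        rw [← hQ4.1] at hm
        simp [Q4] at hm; exact hm.1
      · intro hx
        have hm : i ∈ Q4 a x' := by simp [Q4, hx, hx'2, h']
        rw [hQ4.1] at hm
        simp [Q4] at hm; exact hm.1
  have hF1'' : ∀ i, (x.1 ≤ (a i).1 ↔ x''.1 ≤ (a i).1) := by
    intro i
    by_cases h : x.2 ≤ (a i).2
    · constructor
      · intro hx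
        have hm : i ∈ Q1 a x := by simp [Q1, hx, h]
        rw [← hQ1.2] at hm
        simp [Q1] at hm; exact hm.1
      · intro hx
        have hm : i ∈ Q1 a x'' := by simp [Q1, hx, hx''2, h]
        rw [hQ1.2] at hm
        simp [Q1] at hm; exact hm.1
    · have h' : (a i).2 < x.2 := not_le.mp h
      constructor
      · intro hx
        have hm : i ∈ Q4 a x := by simp [Q4, hx, h']
        rw [← hQ4.2] at hm
        simp [Q4] at hm; exact hm.1
      · intro hx
        have hm : i ∈ Q4 a x'' := by simp [Q4, hx, hx''2, h']
        rw [hQ4.2] at hm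
        simp [Q4] at hm; exact hm.1
  -- third-quadrant points are never captured
  have hQ3CR : ∀ i, (a i).1 < x.1 → (a i).2 < x.2 → l1 (x - a i) < l1 (e - a i) + ℓ/k := by
    intro i ha1 ha2
    rw [l1g, l1g]
    rw [abs_of_pos (by linarith : (0:ℝ) < x.1 - (a i).1),
        abs_of_pos (by linarith : (0:ℝ) < x.2 - (a i).2),
        abs_of_pos (by linarith : (0:ℝ) < e.1 - (a i).1),
        abs_of_pos (by linarith : (0:ℝ) < e.2 - (a i).2)]
    linarith
  -- boundary points lie weakly right of x
  have hBnotlt : ∀ i, l1 (x - a i) = l1 (e - a i) + ℓ/k → x.1 ≤ (a i).1 := by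
    intro i hB
    by_contra h
    push_neg at h
    by_cases h2 : x.2 ≤ (a i).2
    · have hm : i ∈ bCR a ℓ k e x ∩ Q2 a x := by
        simp [bCR, Q2, hB, h, h2]
      rw [hbQ2] at hm
      exact absurd hm (Finset.notMem_empty i)
    · exact absurd hB (ne_of_lt (hQ3CR i h (not_le.mp h2)))
  -- per-index change for the first perturbation
  have key1 : ∀ i, min (l1 (x' - a i)) (l1 (e' - a i) + ℓ / k)
      - min (l1 (x - a i)) (l1 (e - a i) + ℓ / k) =
      (if l1 (e - a i) + ℓ/k ≤ l1 (x - a i) then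
        if l1 (x - a i) = l1 (e - a i) + ℓ/k then
          (if e.2 < (a i).2 then lam1 else -beta1)
        else (if e.2 < (a i).2 then beta1 else -beta1)
      else (if x.1 ≤ (a i).1 then lam1 else -lam1)) := by
    intro i
    obtain ⟨hna1, hna2⟩ := hne i
    by_cases hP : l1 (e - a i) + ℓ/k ≤ l1 (x - a i)
    · by_cases hB : l1 (x - a i) = l1 (e - a i) + ℓ/k
      · -- boundary point
        have hx1a : x.1 ≤ (a i).1 := hBnotlt i hB
        have hx1s : x.1 < (a i).1 := lt_of_le_of_ne hx1a (Ne.symm hna1)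
        have hx1a' : x.1 - lam1 ≤ (a i).1 := by
          have := (hF1' i).1 hx1a; rwa [hx'1] at this
        have hxx' : l1 (x' - a i) = l1 (x - a i) + lam1 := by
          rw [l1x', l1g, abs_of_nonpos (by linarith : x.1 - lam1 - (a i).1 ≤ 0),
            abs_of_nonpos (by linarith : x.1 - (a i).1 ≤ 0)]
          ring
        have m0 : min (l1 (x - a i)) (l1 (e - a i) + ℓ/k) = l1 (x - a i) :=
          min_eq_left (le_of_eq hB)
        by_cases hE : e.2 < (a i).2
        · have hee' : l1 (e' - a i) = l1 (e - a i) + beta1 := by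
            rw [l1e', l1g, abs_of_nonpos (by linarith : e.2 - beta1 - (a i).2 ≤ 0),
              abs_of_nonpos (by linarith : e.2 - (a i).2 ≤ 0)]
            ring
          have m1 : min (l1 (x' - a i)) (l1 (e' - a i) + ℓ/k) = l1 (x - a i) + lam1 := by
            rw [hxx', hee']; exact min_eq_left (by linarith)
          rw [m1, m0, if_pos hP, if_pos hB, if_pos hE]; ring
        · have ha2 : (a i).2 < e.2 := lt_of_le_of_ne (not_lt.mp hE) hna2
          have hsep1 : (a i).2 < e.2 - beta1 := (hsep i).1 ha2
          have hee' : l1 (e' - a i) = l1 (e - a i) - beta1 := by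
            rw [l1e', l1g, abs_of_pos (by linarith : (0:ℝ) < e.2 - beta1 - (a i).2),
              abs_of_pos (by linarith : (0:ℝ) < e.2 - (a i).2)]
            ring
          have m1 : min (l1 (x' - a i)) (l1 (e' - a i) + ℓ/k) = l1 (x - a i) - beta1 := by
            rw [hxx', hee']
            have : l1 (e - a i) - beta1 + ℓ/k = l1 (x - a i) - beta1 := by rw [hB]; ring
            rw [this]; exact min_eq_right (by linarith)
          rw [m1, m0, if_pos hP, if_pos hB, if_neg hE]; ring
      · -- interior of captation region
        have hmem : i ∈ CR a ℓ k e' x' := by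
          have h1 : i ∈ CR a ℓ k e x \ bCR a ℓ k e x := by
            simp [CR, bCR, hP, hB]
          rw [← hCR'] at h1
          exact (Finset.mem_sdiff.mp h1).1
        have hP' : l1 (e' - a i) + ℓ/k ≤ l1 (x' - a i) := by
          simpa [CR] using hmem
        have m1 : min (l1 (x' - a i)) (l1 (e' - a i) + ℓ/k) = l1 (e' - a i) + ℓ/k :=
          min_eq_right hP'
        have m0 : min (l1 (x - a i)) (l1 (e - a i) + ℓ/k) = l1 (e - a i) + ℓ/k :=
          min_eq_right hP
        rw [m1, m0, if_pos hP, if_neg hB]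
        by_cases hE : e.2 < (a i).2
        · have hee' : l1 (e' - a i) = l1 (e - a i) + beta1 := by
            rw [l1e', l1g, abs_of_nonpos (by linarith : e.2 - beta1 - (a i).2 ≤ 0),
              abs_of_nonpos (by linarith : e.2 - (a i).2 ≤ 0)]
            ring
          rw [hee', if_pos hE]; ring
        · have ha2 : (a i).2 < e.2 := lt_of_le_of_ne (not_lt.mp hE) hna2
          have hsep1 : (a i).2 < e.2 - beta1 := (hsep i).1 ha2
          have hee' : l1 (e' - a i) = l1 (e - a i) - beta1 := by
            rw [l1e', l1g, abs_of_pos (by linarith : (0:ℝ) < e.2 - beta1 - (a i).2),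
              abs_of_pos (by linarith : (0:ℝ) < e.2 - (a i).2)]
            ring
          rw [hee', if_neg hE]; ring
    · -- outside the captation region
      have hPx : l1 (x - a i) < l1 (e - a i) + ℓ/k := not_le.mp hP
      have hnotCR' : ¬ (l1 (e' - a i) + ℓ/k ≤ l1 (x' - a i)) := by
        intro hc
        have h1 : i ∈ CR a ℓ k e' x' \ bCR a ℓ k e x := by
          simp [CR, bCR, hc, ne_of_lt hPx]
        rw [hCR'] at h1
        have h2 := (Finset.mem_sdiff.mp h1).1
        simp [CR] at h2
        exact absurd h2 (not_le.mpr hPx)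
      have hPx' : l1 (x' - a i) < l1 (e' - a i) + ℓ/k := not_le.mp hnotCR'
      have m1 : min (l1 (x' - a i)) (l1 (e' - a i) + ℓ/k) = l1 (x' - a i) :=
        min_eq_left (le_of_lt hPx')
      have m0 : min (l1 (x - a i)) (l1 (e - a i) + ℓ/k) = l1 (x - a i) :=
        min_eq_left (le_of_lt hPx)
      rw [m1, m0, if_neg hP, l1x', l1g]
      by_cases hx1a : x.1 ≤ (a i).1
      · have hx1s : x.1 < (a i).1 := lt_of_le_of_ne hx1a (Ne.symm hna1)
        have h' : x.1 - lam1 ≤ (a i).1 := by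
          have := (hF1' i).1 hx1a; rwa [hx'1] at this
        rw [abs_of_nonpos (by linarith : x.1 - lam1 - (a i).1 ≤ 0),
          abs_of_nonpos (by linarith : x.1 - (a i).1 ≤ 0), if_pos hx1a]
        ring
      · have ha1 : (a i).1 < x.1 := not_le.mp hx1a
        have h' : (a i).1 < x.1 - lam1 := by
          have : ¬ (x'.1 ≤ (a i).1) := fun h => hx1a ((hF1' i).2 h)
          rw [hx'1] at this; exact not_le.mp this
        rw [abs_of_pos (by linarith : (0:ℝ) < x.1 - lam1 - (a i).1),
          abs_of_pos (by linarith : (0:ℝ) < x.1 - (a i).1), if_neg hx1a]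
        ring
  -- per-index change for the second perturbation
  have key2 : ∀ i, min (l1 (x'' - a i)) (l1 (e'' - a i) + ℓ / k)
      - min (l1 (x - a i)) (l1 (e - a i) + ℓ / k) =
      (if l1 (e - a i) + ℓ/k ≤ l1 (x - a i) then
        if l1 (x - a i) = l1 (e - a i) + ℓ/k then
          (if e.2 < (a i).2 then -beta2 else -lam2)
        else (if e.2 < (a i).2 then -beta2 else beta2)
      else (if x.1 ≤ (a i).1 then -lam2 else lam2)) := by
    intro i
    obtain ⟨hna1, hna2⟩ := hne i
    by_cases hP : l1 (e - a i) + ℓ/k ≤ l1 (x - a i)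
    · by_cases hB : l1 (x - a i) = l1 (e - a i) + ℓ/k
      · -- boundary point
        have hx1a : x.1 ≤ (a i).1 := hBnotlt i hB
        have hx1s : x.1 < (a i).1 := lt_of_le_of_ne hx1a (Ne.symm hna1)
        have hx1a'' : x.1 + lam2 ≤ (a i).1 := by
          have := (hF1'' i).1 hx1a; rwa [hx''1] at this
        have hxx'' : l1 (x'' - a i) = l1 (x - a i) - lam2 := by
          rw [l1x'', l1g, abs_of_nonpos (by linarith : x.1 + lam2 - (a i).1 ≤ 0),
            abs_of_nonpos (by linarith : x.1 - (a i).1 ≤ 0)]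
          ring
        have m0 : min (l1 (x - a i)) (l1 (e - a i) + ℓ/k) = l1 (x - a i) :=
          min_eq_left (le_of_eq hB)
        by_cases hE : e.2 < (a i).2
        · have hsep2 : e.2 + beta2 < (a i).2 := (hsep i).2 hE
          have hee'' : l1 (e'' - a i) = l1 (e - a i) - beta2 := by
            rw [l1e'', l1g, abs_of_nonpos (by linarith : e.2 + beta2 - (a i).2 ≤ 0),
              abs_of_nonpos (by linarith : e.2 - (a i).2 ≤ 0)]
            ring
          have m1 : min (l1 (x'' - a i)) (l1 (e'' - a i) + ℓ/k) = l1 (x - a i) - beta2 := by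
            rw [hxx'', hee'']
            have : l1 (e - a i) - beta2 + ℓ/k = l1 (x - a i) - beta2 := by rw [hB]; ring
            rw [this]; exact min_eq_right (by linarith)
          rw [m1, m0, if_pos hP, if_pos hB, if_pos hE]; ring
        · have ha2 : (a i).2 < e.2 := lt_of_le_of_ne (not_lt.mp hE) hna2
          have hee'' : l1 (e'' - a i) = l1 (e - a i) + beta2 := by
            rw [l1e'', l1g, abs_of_pos (by linarith : (0:ℝ) < e.2 + beta2 - (a i).2),
              abs_of_pos (by linarith : (0:ℝ) < e.2 - (a i).2)]
            ring
          have m1 : min (l1 (x'' - a i)) (l1 (e'' - a i) + ℓ/k) = l1 (x - a i) - lam2 := by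
            rw [hxx'', hee'']
            have : l1 (e - a i) + beta2 + ℓ/k = l1 (x - a i) + beta2 := by rw [hB]; ring
            rw [this]; exact min_eq_left (by linarith)
          rw [m1, m0, if_pos hP, if_pos hB, if_neg hE]; ring
      · -- interior of captation region
        have hmem : i ∈ CR a ℓ k e'' x'' := by
          have h1 : i ∈ CR a ℓ k e x \ bCR a ℓ k e x := by
            simp [CR, bCR, hP, hB]
          rw [← hCR''] at h1
          exact (Finset.mem_sdiff.mp h1).1
        have hP'' : l1 (e'' - a i) + ℓ/k ≤ l1 (x'' - a i) := by
          simpa [CR] using hmem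
        have m1 : min (l1 (x'' - a i)) (l1 (e'' - a i) + ℓ/k) = l1 (e'' - a i) + ℓ/k :=
          min_eq_right hP''
        have m0 : min (l1 (x - a i)) (l1 (e - a i) + ℓ/k) = l1 (e - a i) + ℓ/k :=
          min_eq_right hP
        rw [m1, m0, if_pos hP, if_neg hB]
        by_cases hE : e.2 < (a i).2
        · have hsep2 : e.2 + beta2 < (a i).2 := (hsep i).2 hE
          have hee'' : l1 (e'' - a i) = l1 (e - a i) - beta2 := by
            rw [l1e'', l1g, abs_of_nonpos (by linarith : e.2 + beta2 - (a i).2 ≤ 0),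
              abs_of_nonpos (by linarith : e.2 - (a i).2 ≤ 0)]
            ring
          rw [hee'', if_pos hE]; ring
        · have ha2 : (a i).2 < e.2 := lt_of_le_of_ne (not_lt.mp hE) hna2
          have hee'' : l1 (e'' - a i) = l1 (e - a i) + beta2 := by
            rw [l1e'', l1g, abs_of_pos (by linarith : (0:ℝ) < e.2 + beta2 - (a i).2),
              abs_of_pos (by linarith : (0:ℝ) < e.2 - (a i).2)]
            ring
          rw [hee'', if_neg hE]; ring
    · -- outside the captation region
      have hPx : l1 (x - a i) < l1 (e - a i) + ℓ/k := not_le.mp hP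
      have hnotCR'' : ¬ (l1 (e'' - a i) + ℓ/k ≤ l1 (x'' - a i)) := by
        intro hc
        have h1 : i ∈ CR a ℓ k e'' x'' \ bCR a ℓ k e x := by
          simp [CR, bCR, hc, ne_of_lt hPx]
        rw [hCR''] at h1
        have h2 := (Finset.mem_sdiff.mp h1).1
        simp [CR] at h2
        exact absurd h2 (not_le.mpr hPx)
      have hPx'' : l1 (x'' - a i) < l1 (e'' - a i) + ℓ/k := not_le.mp hnotCR''
      have m1 : min (l1 (x'' - a i)) (l1 (e'' - a i) + ℓ/k) = l1 (x'' - a i) :=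
        min_eq_left (le_of_lt hPx'')
      have m0 : min (l1 (x - a i)) (l1 (e - a i) + ℓ/k) = l1 (x - a i) :=
        min_eq_left (le_of_lt hPx)
      rw [m1, m0, if_neg hP, l1x'', l1g]
      by_cases hx1a : x.1 ≤ (a i).1
      · have hx1s : x.1 < (a i).1 := lt_of_le_of_ne hx1a (Ne.symm hna1)
        have h' : x.1 + lam2 ≤ (a i).1 := by
          have := (hF1'' i).1 hx1a; rwa [hx''1] at this
        rw [abs_of_nonpos (by linarith : x.1 + lam2 - (a i).1 ≤ 0),
          abs_of_nonpos (by linarith : x.1 - (a i).1 ≤ 0), if_pos hx1a]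
        ring
      · have ha1 : (a i).1 < x.1 := not_le.mp hx1a
        have h' : (a i).1 < x.1 + lam2 := by linarith
        rw [abs_of_pos (by linarith : (0:ℝ) < x.1 + lam2 - (a i).1),
          abs_of_pos (by linarith : (0:ℝ) < x.1 - (a i).1), if_neg hx1a]
        ring
  constructor
  · -- first perturbation
    have hL1 : fObj a ω ℓ k e' x' - fObj a ω ℓ k e x
        = ∑ i, ω i * ((if l1 (e - a i) + ℓ/k ≤ l1 (x - a i) then
            if l1 (x - a i) = l1 (e - a i) + ℓ/k then
              (if e.2 < (a i).2 then lam1 else -beta1)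
            else (if e.2 < (a i).2 then beta1 else -beta1)
          else (if x.1 ≤ (a i).1 then lam1 else -lam1))) := by
      unfold fObj
      rw [← Finset.sum_sub_distrib]
      exact Finset.sum_congr rfl fun i _ => by rw [← mul_sub, key1 i]
    rw [hL1]
    have expand : (w1 a ω ℓ k e x - w2 a ω ℓ k e x - w3 a ω ℓ k e x + w4 a ω ℓ k e x) * lam1
        + (wP2 a ω ℓ k e x - wM2 a ω ℓ k e x) * beta1
        + wDP2 a ω ℓ k e x * lam1 - wDM2 a ω ℓ k e x * beta1
        = w1 a ω ℓ k e x * lam1 - w2 a ω ℓ k e x * lam1 - w3 a ω ℓ k e x * lam1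
          + w4 a ω ℓ k e x * lam1 + wP2 a ω ℓ k e x * beta1 - wM2 a ω ℓ k e x * beta1
          + wDP2 a ω ℓ k e x * lam1 - wDM2 a ω ℓ k e x * beta1 := by ring
    rw [expand]
    rw [show w1 a ω ℓ k e x * lam1
        = ∑ i, if i ∈ Q1 a x \ CR a ℓ k e x then ω i * lam1 else 0 from by
      unfold w1; exact sum_mul_ite _ _ _]
    rw [show w2 a ω ℓ k e x * lam1
        = ∑ i, if i ∈ Q2 a x \ riCR a ℓ k e x then ω i * lam1 else 0 from by
      unfold w2; exact sum_mul_ite _ _ _]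
    rw [show w3 a ω ℓ k e x * lam1
        = ∑ i, if i ∈ Q3 a x then ω i * lam1 else 0 from by
      unfold w3; exact sum_mul_ite _ _ _]
    rw [show w4 a ω ℓ k e x * lam1
        = ∑ i, if i ∈ Q4 a x \ CR a ℓ k e x then ω i * lam1 else 0 from by
      unfold w4; exact sum_mul_ite _ _ _]
    rw [show wP2 a ω ℓ k e x * beta1
        = ∑ i, if i ∈ (riCR a ℓ k e x).filter (fun j => e.2 < (a j).2) then ω i * beta1 else 0 from by
      unfold wP2; exact sum_mul_ite _ _ _]
    rw [show wM2 a ω ℓ k e x * beta1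
        = ∑ i, if i ∈ (riCR a ℓ k e x).filter (fun j => (a j).2 < e.2) then ω i * beta1 else 0 from by
      unfold wM2; exact sum_mul_ite _ _ _]
    rw [show wDP2 a ω ℓ k e x * lam1
        = ∑ i, if i ∈ ((bCR a ℓ k e x) \ Q2 a x).filter (fun j => e.2 < (a j).2) then ω i * lam1 else 0 from by
      unfold wDP2; exact sum_mul_ite _ _ _]
    rw [show wDM2 a ω ℓ k e x * beta1
        = ∑ i, if i ∈ ((bCR a ℓ k e x) \ Q2 a x).filter (fun j => (a j).2 < e.2) then ω i * beta1 else 0 from by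
      unfold wDM2; exact sum_mul_ite _ _ _]
    simp only [← Finset.sum_sub_distrib, ← Finset.sum_add_distrib]
    refine Finset.sum_congr rfl fun i _ => ?_
    simp only [Finset.mem_sdiff, Finset.mem_filter, Finset.mem_univ, true_and,
      riCR, CR, bCR, Q1, Q2, Q3, Q4]
    obtain ⟨hna1, hna2⟩ := hne i
    by_cases hP : l1 (e - a i) + ℓ/k ≤ l1 (x - a i)
    · by_cases hB : l1 (x - a i) = l1 (e - a i) + ℓ/k
      · have hx1a : x.1 ≤ (a i).1 := hBnotlt i hB
        have hnlt : ¬ (a i).1 < x.1 := not_lt.mpr hx1a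
        by_cases hE : e.2 < (a i).2
        · have hnE : ¬ (a i).2 < e.2 := not_lt.mpr (le_of_lt hE)
          simp [hP, hB, hE, hnlt, hnE]
        · have hlt2 : (a i).2 < e.2 := lt_of_le_of_ne (not_lt.mp hE) hna2
          simp [hP, hB, hE, hnlt, hlt2]
      · have hnQ3 : ¬ ((a i).1 < x.1 ∧ (a i).2 < x.2) := fun h =>
          absurd hP (not_le.mpr (hQ3CR i h.1 h.2))
        by_cases hE : e.2 < (a i).2
        · have hnE : ¬ (a i).2 < e.2 := not_lt.mpr (le_of_lt hE)
          simp [hP, hB, hE, hnQ3, hnE]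
        · have hlt2 : (a i).2 < e.2 := lt_of_le_of_ne (not_lt.mp hE) hna2
          simp [hP, hB, hE, hnQ3, hlt2]
    · have hnB : l1 (x - a i) ≠ l1 (e - a i) + ℓ/k := ne_of_lt (not_le.mp hP)
      by_cases hx1a : x.1 ≤ (a i).1 <;> by_cases hx2a : x.2 ≤ (a i).2
      · simp [hP, hnB, hx1a, hx2a, not_lt.mpr hx1a, not_lt.mpr hx2a]
      · simp [hP, hnB, hx1a, hx2a, not_lt.mpr hx1a, not_le.mp hx2a]
      · simp [hP, hnB, hx1a, hx2a, not_le.mp hx1a, not_lt.mpr hx2a]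
      · simp [hP, hnB, hx1a, hx2a, not_le.mp hx1a, not_le.mp hx2a]
  · -- second perturbation
    have hL2 : fObj a ω ℓ k e'' x'' - fObj a ω ℓ k e x
        = ∑ i, ω i * ((if l1 (e - a i) + ℓ/k ≤ l1 (x - a i) then
            if l1 (x - a i) = l1 (e - a i) + ℓ/k then
              (if e.2 < (a i).2 then -beta2 else -lam2)
            else (if e.2 < (a i).2 then -beta2 else beta2)
          else (if x.1 ≤ (a i).1 then -lam2 else lam2))) := by
      unfold fObj
      rw [← Finset.sum_sub_distrib]
      exact Finset.sum_congr rfl fun i _ => by rw [← mul_sub, key2 i]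
    rw [hL2]
    have expand : -((w1 a ω ℓ k e x - w2 a ω ℓ k e x - w3 a ω ℓ k e x + w4 a ω ℓ k e x) * lam2)
        - (wP2 a ω ℓ k e x - wM2 a ω ℓ k e x) * beta2
        - wDP2 a ω ℓ k e x * beta2 - wDM2 a ω ℓ k e x * lam2
        = -(w1 a ω ℓ k e x * lam2) + w2 a ω ℓ k e x * lam2 + w3 a ω ℓ k e x * lam2
          - w4 a ω ℓ k e x * lam2 - wP2 a ω ℓ k e x * beta2 + wM2 a ω ℓ k e x * beta2
          - wDP2 a ω ℓ k e x * beta2 - wDM2 a ω ℓ k e x * lam2 := by ring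
    rw [expand]
    rw [show w1 a ω ℓ k e x * lam2
        = ∑ i, if i ∈ Q1 a x \ CR a ℓ k e x then ω i * lam2 else 0 from by
      unfold w1; exact sum_mul_ite _ _ _]
    rw [show w2 a ω ℓ k e x * lam2
        = ∑ i, if i ∈ Q2 a x \ riCR a ℓ k e x then ω i * lam2 else 0 from by
      unfold w2; exact sum_mul_ite _ _ _]
    rw [show w3 a ω ℓ k e x * lam2
        = ∑ i, if i ∈ Q3 a x then ω i * lam2 else 0 from by
      unfold w3; exact sum_mul_ite _ _ _]
    rw [show w4 a ω ℓ k e x * lam2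
        = ∑ i, if i ∈ Q4 a x \ CR a ℓ k e x then ω i * lam2 else 0 from by
      unfold w4; exact sum_mul_ite _ _ _]
    rw [show wP2 a ω ℓ k e x * beta2
        = ∑ i, if i ∈ (riCR a ℓ k e x).filter (fun j => e.2 < (a j).2) then ω i * beta2 else 0 from by
      unfold wP2; exact sum_mul_ite _ _ _]
    rw [show wM2 a ω ℓ k e x * beta2
        = ∑ i, if i ∈ (riCR a ℓ k e x).filter (fun j => (a j).2 < e.2) then ω i * beta2 else 0 from by
      unfold wM2; exact sum_mul_ite _ _ _]
    rw [show wDP2 a ω ℓ k e x * beta2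
        = ∑ i, if i ∈ ((bCR a ℓ k e x) \ Q2 a x).filter (fun j => e.2 < (a j).2) then ω i * beta2 else 0 from by
      unfold wDP2; exact sum_mul_ite _ _ _]
    rw [show wDM2 a ω ℓ k e x * lam2
        = ∑ i, if i ∈ ((bCR a ℓ k e x) \ Q2 a x).filter (fun j => (a j).2 < e.2) then ω i * lam2 else 0 from by
      unfold wDM2; exact sum_mul_ite _ _ _]
    rw [← Finset.sum_neg_distrib]
    simp only [← Finset.sum_sub_distrib, ← Finset.sum_add_distrib]
    refine Finset.sum_congr rfl fun i _ => ?_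
    simp only [Finset.mem_sdiff, Finset.mem_filter, Finset.mem_univ, true_and,
      riCR, CR, bCR, Q1, Q2, Q3, Q4]
    obtain ⟨hna1, hna2⟩ := hne i
    by_cases hP : l1 (e - a i) + ℓ/k ≤ l1 (x - a i)
    · by_cases hB : l1 (x - a i) = l1 (e - a i) + ℓ/k
      · have hx1a : x.1 ≤ (a i).1 := hBnotlt i hB
        have hnlt : ¬ (a i).1 < x.1 := not_lt.mpr hx1a
        by_cases hE : e.2 < (a i).2
        · have hnE : ¬ (a i).2 < e.2 := not_lt.mpr (le_of_lt hE)
          simp [hP, hB, hE, hnlt, hnE]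
        · have hlt2 : (a i).2 < e.2 := lt_of_le_of_ne (not_lt.mp hE) hna2
          simp [hP, hB, hE, hnlt, hlt2]
      · have hnQ3 : ¬ ((a i).1 < x.1 ∧ (a i).2 < x.2) := fun h =>
          absurd hP (not_le.mpr (hQ3CR i h.1 h.2))
        by_cases hE : e.2 < (a i).2
        · have hnE : ¬ (a i).2 < e.2 := not_lt.mpr (le_of_lt hE)
          simp [hP, hB, hE, hnQ3, hnE]
        · have hlt2 : (a i).2 < e.2 := lt_of_le_of_ne (not_lt.mp hE) hna2
          simp [hP, hB, hE, hnQ3, hlt2]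
    · have hnB : l1 (x - a i) ≠ l1 (e - a i) + ℓ/k := ne_of_lt (not_le.mp hP)
      by_cases hx1a : x.1 ≤ (a i).1 <;> by_cases hx2a : x.2 ≤ (a i).2
      · simp [hP, hnB, hx1a, hx2a, not_lt.mpr hx1a, not_lt.mpr hx2a]
      · simp [hP, hnB, hx1a, hx2a, not_lt.mpr hx1a, not_le.mp hx2a]
      · simp [hP, hnB, hx1a, hx2a, not_le.mp hx1a, not_lt.mpr hx2a]
      · simp [hP, hnB, hx1a, hx2a, not_le.mp hx1a, not_le.mp hx2a]
end

section
/- Under the diagonal-perturbation setup, if in addition π/4≤θ' and ∂CR_{e,x}∩C_x²(A)=∅, then f(e',x')−f(e,x) = (ω¹−ω²−ω³+ω⁴)λ₁ + (ω⁺−ω⁻+ω^{δ+})β₁ − ω^{δ−}β₁ and f(e'',x'')−f(e,x) = −(ω¹−ω²−ω³+ω⁴)λ₂ − (ω⁺−ω⁻)β₂ − ω^{δ+}λ₂ − ω^{δ−}λ₂. -/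
open Real Finset
open scoped Classical

lemma habs_le' (u v : ℝ) (h : u ≤ v) : |u - v| = v - u := by
  rw [abs_of_nonpos (by linarith)]; ring

lemma habs_ge' (u v : ℝ) (h : v ≤ u) : |u - v| = u - v :=
  abs_of_nonneg (by linarith)

lemma l1_sub' (p q : ℝ × ℝ) : l1 (p - q) = |p.1 - q.1| + |p.2 - q.2| := by
  simp [l1]

lemma sin_add_cos_anti {u v : ℝ} (h1 : π/4 ≤ u) (h2 : u ≤ v) (h3 : v ≤ π/2) :
    Real.sin v + Real.cos v ≤ Real.sin u + Real.cos u := by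
  have hpi := Real.pi_pos
  have key : ∀ t : ℝ, Real.sin t + Real.cos t = Real.sqrt 2 * Real.sin (3*π/4 - t) := by
    intro t
    have h34 : (3*π/4 : ℝ) = π - π/4 := by ring
    have hs : Real.sin (3*π/4) = Real.sqrt 2 / 2 := by
      rw [h34, Real.sin_pi_sub, Real.sin_pi_div_four]
    have hc : Real.cos (3*π/4) = -(Real.sqrt 2 / 2) := by
      rw [h34, Real.cos_pi_sub, Real.cos_pi_div_four]
    have h2' : Real.sqrt 2 * Real.sqrt 2 = 2 := Real.mul_self_sqrt (by norm_num)
    rw [Real.sin_sub, hs, hc]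
    linear_combination (-(Real.cos t + Real.sin t)/2) * h2'
  rw [key u, key v]
  have hmono := Real.strictMonoOn_sin.monotoneOn
  have h := hmono (Set.mem_Icc.2 ⟨by linarith, by linarith⟩)
    (Set.mem_Icc.2 ⟨by linarith, by linarith⟩) (by linarith : 3*π/4 - v ≤ 3*π/4 - u)
  nlinarith [Real.sqrt_nonneg 2]
lemma sum_partition {M : ℕ} (a : Fin M → ℝ × ℝ) (ℓ k : ℝ) (e x : ℝ × ℝ)
    (hne1 : ∀ i, (a i).1 ≠ x.1) (hne2 : ∀ i, (a i).2 ≠ e.2)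
    (hBR : bCR a ℓ k e x ⊆ CR a ℓ k e x)
    (hBQ2 : ∀ i ∈ bCR a ℓ k e x, i ∉ Q2 a x)
    (hQ3R : ∀ i, (a i).1 < x.1 → (a i).2 < x.2 → i ∉ CR a ℓ k e x)
    (g : Fin M → ℝ) :
    ∑ i, g i = (∑ i ∈ ((bCR a ℓ k e x) \ Q2 a x).filter (fun j => e.2 < (a j).2), g i)
      + (∑ i ∈ ((bCR a ℓ k e x) \ Q2 a x).filter (fun j => (a j).2 < e.2), g i)
      + (∑ i ∈ (riCR a ℓ k e x).filter (fun j => e.2 < (a j).2), g i)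
      + (∑ i ∈ (riCR a ℓ k e x).filter (fun j => (a j).2 < e.2), g i)
      + (∑ i ∈ Q1 a x \ CR a ℓ k e x, g i) + (∑ i ∈ Q2 a x \ riCR a ℓ k e x, g i)
      + (∑ i ∈ Q3 a x, g i) + (∑ i ∈ Q4 a x \ CR a ℓ k e x, g i) := by
  classical
  have hBQ : bCR a ℓ k e x \ Q2 a x = bCR a ℓ k e x := by
    apply Finset.sdiff_eq_self_iff_disjoint.2
    rw [Finset.disjoint_left]
    exact hBQ2
  -- split a set by the sign of a j 2 - e 2
  have hsign : ∀ s : Finset (Fin M),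
      ∑ i ∈ s, g i = (∑ i ∈ s.filter (fun j => e.2 < (a j).2), g i)
        + (∑ i ∈ s.filter (fun j => (a j).2 < e.2), g i) := by
    intro s
    have hfc : s.filter (fun j => ¬ e.2 < (a j).2) = s.filter (fun j => (a j).2 < e.2) := by
      apply Finset.filter_congr
      intro i _
      simp only [not_lt]
      exact ⟨fun h => lt_of_le_of_ne h (hne2 i), fun h => h.le⟩
    rw [← Finset.sum_filter_add_sum_filter_not s (fun j => e.2 < (a j).2) g, hfc]
  have hmain : ∑ i ∈ Finset.univ \ CR a ℓ k e x, g i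
      = (∑ i ∈ Q1 a x \ CR a ℓ k e x, g i) + (∑ i ∈ Q2 a x \ riCR a ℓ k e x, g i)
        + (∑ i ∈ Q3 a x, g i) + (∑ i ∈ Q4 a x \ CR a ℓ k e x, g i) := by
    rw [← Finset.sum_filter_add_sum_filter_not (Finset.univ \ CR a ℓ k e x)
      (fun j => x.1 ≤ (a j).1) g,
      ← Finset.sum_filter_add_sum_filter_not (((Finset.univ : Finset (Fin M)) \ CR a ℓ k e x).filter
        (fun j => x.1 ≤ (a j).1)) (fun j => x.2 ≤ (a j).2) g,
      ← Finset.sum_filter_add_sum_filter_not (((Finset.univ : Finset (Fin M)) \ CR a ℓ k e x).filter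
        (fun j => ¬ x.1 ≤ (a j).1)) (fun j => x.2 ≤ (a j).2) g]
    have hE1 : (((Finset.univ : Finset (Fin M)) \ CR a ℓ k e x).filter
        (fun j => x.1 ≤ (a j).1)).filter (fun j => x.2 ≤ (a j).2) = Q1 a x \ CR a ℓ k e x := by
      ext i
      simp only [Finset.mem_filter, Finset.mem_sdiff, Finset.mem_univ, true_and, Q1]
      tauto
    have hE4 : (((Finset.univ : Finset (Fin M)) \ CR a ℓ k e x).filter
        (fun j => x.1 ≤ (a j).1)).filter (fun j => ¬ x.2 ≤ (a j).2) = Q4 a x \ CR a ℓ k e x := by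
      ext i
      simp only [Finset.mem_filter, Finset.mem_sdiff, Finset.mem_univ, true_and, Q4, not_le]
      tauto
    have hE2 : (((Finset.univ : Finset (Fin M)) \ CR a ℓ k e x).filter
        (fun j => ¬ x.1 ≤ (a j).1)).filter (fun j => x.2 ≤ (a j).2) = Q2 a x \ riCR a ℓ k e x := by
      ext i
      simp only [Finset.mem_filter, Finset.mem_sdiff, Finset.mem_univ, true_and, Q2, riCR,
        not_le]
      constructor
      · rintro ⟨⟨hR, h1⟩, h2⟩
        exact ⟨⟨h1, h2⟩, fun hm => hR hm.1⟩
      · rintro ⟨⟨h1, h2⟩, hm⟩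
        refine ⟨⟨fun hR => ?_, h1⟩, h2⟩
        by_cases hb : i ∈ bCR a ℓ k e x
        · exact hBQ2 i hb (by simp [Q2, h1, h2])
        · exact hm ⟨hR, hb⟩
    have hE3 : (((Finset.univ : Finset (Fin M)) \ CR a ℓ k e x).filter
        (fun j => ¬ x.1 ≤ (a j).1)).filter (fun j => ¬ x.2 ≤ (a j).2) = Q3 a x := by
      ext i
      simp only [Finset.mem_filter, Finset.mem_sdiff, Finset.mem_univ, true_and, Q3, not_le]
      exact ⟨fun h => ⟨h.1.2, h.2⟩, fun h => ⟨⟨hQ3R i h.1 h.2, h.1⟩, h.2⟩⟩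
    rw [hE1, hE2, hE3, hE4]
    ring
  have h0 : ∑ i ∈ Finset.univ \ CR a ℓ k e x, g i + ∑ i ∈ CR a ℓ k e x, g i = ∑ i, g i :=
    Finset.sum_sdiff (Finset.subset_univ _)
  have h1 : ∑ i ∈ CR a ℓ k e x \ bCR a ℓ k e x, g i + ∑ i ∈ bCR a ℓ k e x, g i
      = ∑ i ∈ CR a ℓ k e x, g i := Finset.sum_sdiff hBR
  have hri : riCR a ℓ k e x = CR a ℓ k e x \ bCR a ℓ k e x := rfl
  rw [← h0, ← h1, hBQ, hsign (bCR a ℓ k e x), hmain, ← hri, hsign (riCR a ℓ k e x)]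
  ring
set_option maxHeartbeats 1000000 in
/-- Lemma 2.1, case (b) π/4 ≤ θ' < θ < θ'' (with no boundary points of the captation
region in C_x²(A)): the exact change of the objective under the diagonal perturbations. -/
theorem diagonal_perturbation_delta_flat {M : ℕ} (a : Fin M → ℝ × ℝ) (ω : Fin M → ℝ)
    (ℓ k : ℝ) (hℓ : 0 < ℓ) (hk : 1 ≤ k) (hω : ∀ i, 0 < ω i)
    (e x : ℝ × ℝ) (θ : ℝ) (hθ : θ ∈ Set.Ioo 0 (π / 2))
    (hdir : e - x = (ℓ * Real.cos θ, ℓ * Real.sin θ))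
    (hx1 : x.1 ≤ 0) (he1 : 0 ≤ e.1) (hx2 : x.2 ≤ 0) (he2 : 0 ≤ e.2)
    (hne : ∀ i, (a i).1 ≠ x.1 ∧ (a i).2 ≠ e.2)
    (θ' θ'' : ℝ) (h1 : 0 < θ') (h2 : θ' < θ) (h3 : θ < θ'') (h4 : θ'' ≤ π / 2)
    (lam1 beta1 lam2 beta2 : ℝ)
    (hl1 : lam1 = ℓ * (Real.cos θ' - Real.cos θ))
    (hb1 : beta1 = ℓ * (Real.sin θ - Real.sin θ'))
    (hl2 : lam2 = ℓ * (Real.cos θ - Real.cos θ''))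
    (hb2 : beta2 = ℓ * (Real.sin θ'' - Real.sin θ))
    (x' e' x'' e'' : ℝ × ℝ)
    (hx' : x' = x + (-lam1, 0)) (he' : e' = e + (0, -beta1))
    (hx'' : x'' = x + (lam2, 0)) (he'' : e'' = e + (0, beta2))
    (hCR' : CR a ℓ k e' x' \ bCR a ℓ k e x = CR a ℓ k e x \ bCR a ℓ k e x)
    (hCR'' : CR a ℓ k e'' x'' \ bCR a ℓ k e x = CR a ℓ k e x \ bCR a ℓ k e x)
    (hQ1 : Q1 a x' = Q1 a x ∧ Q1 a x'' = Q1 a x)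
    (hQ2 : Q2 a x' = Q2 a x ∧ Q2 a x'' = Q2 a x)
    (hQ3 : Q3 a x' = Q3 a x ∧ Q3 a x'' = Q3 a x)
    (hQ4 : Q4 a x' = Q4 a x ∧ Q4 a x'' = Q4 a x)
    (hsep : ∀ i, ((a i).2 < e.2 → (a i).2 < e.2 - beta1) ∧
                 (e.2 < (a i).2 → e.2 + beta2 < (a i).2))
    (h5 : π / 4 ≤ θ')
    (hbQ2 : bCR a ℓ k e x ∩ Q2 a x = ∅) :
    fObj a ω ℓ k e' x' - fObj a ω ℓ k e x =
      (w1 a ω ℓ k e x - w2 a ω ℓ k e x - w3 a ω ℓ k e x + w4 a ω ℓ k e x) * lam1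
        + (wP2 a ω ℓ k e x - wM2 a ω ℓ k e x + wDP2 a ω ℓ k e x) * beta1
        - wDM2 a ω ℓ k e x * beta1 ∧
    fObj a ω ℓ k e'' x'' - fObj a ω ℓ k e x =
      -((w1 a ω ℓ k e x - w2 a ω ℓ k e x - w3 a ω ℓ k e x + w4 a ω ℓ k e x) * lam2)
        - (wP2 a ω ℓ k e x - wM2 a ω ℓ k e x) * beta2
        - wDP2 a ω ℓ k e x * lam2 - wDM2 a ω ℓ k e x * lam2 := by
  classical
  obtain ⟨hθ0, hθπ⟩ := hθ
  have hpi := Real.pi_pos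
  have hr : 0 < ℓ / k := div_pos hℓ (by linarith)
  -- coordinates of the perturbed points
  have hx'1 : x'.1 = x.1 - lam1 := by rw [hx']; simp; ring
  have hx'2 : x'.2 = x.2 := by rw [hx']; simp
  have he'1 : e'.1 = e.1 := by rw [he']; simp
  have he'2 : e'.2 = e.2 - beta1 := by rw [he']; simp; ring
  have hx''1 : x''.1 = x.1 + lam2 := by rw [hx'']; simp
  have hx''2 : x''.2 = x.2 := by rw [hx'']; simp
  have he''1 : e''.1 = e.1 := by rw [he'']; simp
  have he''2 : e''.2 = e.2 + beta2 := by rw [he'']; simp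
  -- positivity and comparisons
  have hcosθ : 0 < Real.cos θ := Real.cos_pos_of_mem_Ioo ⟨by linarith, hθπ⟩
  have hsinθ : 0 < Real.sin θ := Real.sin_pos_of_pos_of_lt_pi hθ0 (by linarith)
  have hex1 : x.1 < e.1 := by
    have h := congrArg Prod.fst hdir
    simp only [Prod.fst_sub] at h
    have h2 := mul_pos hℓ hcosθ
    linarith
  have hex2 : x.2 < e.2 := by
    have h := congrArg Prod.snd hdir
    simp only [Prod.snd_sub] at h
    have h2 := mul_pos hℓ hsinθ
    linarith
  have hsin12 : Real.sin θ' < Real.sin θ :=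
    Real.strictMonoOn_sin ⟨by linarith, by linarith⟩ ⟨by linarith, by linarith⟩ h2
  have hsin23 : Real.sin θ < Real.sin θ'' :=
    Real.strictMonoOn_sin ⟨by linarith, by linarith⟩ ⟨by linarith, by linarith⟩ h3
  have hcos12 : Real.cos θ < Real.cos θ' :=
    Real.cos_lt_cos_of_nonneg_of_le_pi (by linarith) (by linarith) h2
  have hcos23 : Real.cos θ'' < Real.cos θ :=
    Real.cos_lt_cos_of_nonneg_of_le_pi (by linarith) (by linarith) h3
  have hlam1pos : 0 < lam1 := by rw [hl1]; exact mul_pos hℓ (by linarith)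
  have hbeta1pos : 0 < beta1 := by rw [hb1]; exact mul_pos hℓ (by linarith)
  have hlam2pos : 0 < lam2 := by rw [hl2]; exact mul_pos hℓ (by linarith)
  have hbeta2pos : 0 < beta2 := by rw [hb2]; exact mul_pos hℓ (by linarith)
  have hbl1 : beta1 ≤ lam1 := by
    have h := sin_add_cos_anti h5 h2.le (by linarith : θ ≤ π/2)
    rw [hb1, hl1]
    exact mul_le_mul_of_nonneg_left (by linarith) hℓ.le
  have hbl2 : beta2 ≤ lam2 := by
    have h := sin_add_cos_anti (by linarith : π/4 ≤ θ) h3.le h4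
    rw [hb2, hl2]
    exact mul_le_mul_of_nonneg_left (by linarith) hℓ.le
  -- membership characterizations
  have hCRmem : ∀ (E X : ℝ × ℝ) (i : Fin M),
      i ∈ CR a ℓ k E X ↔ l1 (E - a i) + ℓ / k ≤ l1 (X - a i) := by
    intro E X i; simp [CR]
  have hBmem : ∀ i : Fin M,
      i ∈ bCR a ℓ k e x ↔ l1 (x - a i) = l1 (e - a i) + ℓ / k := by
    intro i; simp [bCR]
  have hBR : bCR a ℓ k e x ⊆ CR a ℓ k e x := by
    intro i hi
    rw [hBmem] at hi
    rw [hCRmem]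
    exact le_of_eq hi.symm
  have hBQ2 : ∀ i ∈ bCR a ℓ k e x, i ∉ Q2 a x := by
    intro i hB hQ
    exact Finset.eq_empty_iff_forall_notMem.1 hbQ2 i (Finset.mem_inter.2 ⟨hB, hQ⟩)
  have hQ3R : ∀ i : Fin M, (a i).1 < x.1 → (a i).2 < x.2 → i ∉ CR a ℓ k e x := by
    intro i ha1 ha2 hc
    rw [hCRmem] at hc
    rw [l1_sub', l1_sub'] at hc
    rw [habs_ge' _ _ (by linarith : (a i).1 ≤ e.1), habs_ge' _ _ (by linarith : (a i).2 ≤ e.2),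
      habs_ge' _ _ ha1.le, habs_ge' _ _ ha2.le] at hc
    linarith
  have hBx : ∀ i ∈ bCR a ℓ k e x, x.1 < (a i).1 := by
    intro i hB
    rcases lt_or_gt_of_ne (hne i).1 with h | h
    · exfalso
      by_cases h2 : x.2 ≤ (a i).2
      · exact hBQ2 i hB (by simp [Q2, h, h2])
      · exact hQ3R i h (not_le.1 h2) (hBR hB)
    · exact h
  -- quadrant coordinate transfer
  have hc1 : ∀ i : Fin M, (a i).1 < x.1 → (a i).1 < x.1 - lam1 := by
    intro i hlt
    by_cases h : x.2 ≤ (a i).2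
    · have hm : i ∈ Q2 a x := by simp [Q2, hlt, h]
      rw [← hQ2.1] at hm
      simp only [Q2, Finset.mem_filter] at hm
      have := hm.2.1
      rw [hx'1] at this
      exact this
    · have hm : i ∈ Q3 a x := by simp [Q3, hlt, not_le.1 h]
      rw [← hQ3.1] at hm
      simp only [Q3, Finset.mem_filter] at hm
      have := hm.2.1
      rw [hx'1] at this
      exact this
  have hc2 : ∀ i : Fin M, x.1 < (a i).1 → x.1 + lam2 ≤ (a i).1 := by
    intro i hlt
    by_cases h : x.2 ≤ (a i).2
    · have hm : i ∈ Q1 a x := by simp [Q1, hlt.le, h]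
      rw [← hQ1.2] at hm
      simp only [Q1, Finset.mem_filter] at hm
      have := hm.2.1
      rw [hx''1] at this
      exact this
    · have hm : i ∈ Q4 a x := by simp [Q4, hlt.le, not_le.1 h]
      rw [← hQ4.2] at hm
      simp only [Q4, Finset.mem_filter] at hm
      have := hm.2.1
      rw [hx''1] at this
      exact this
  -- captation region transfer
  have hnotCR' : ∀ i : Fin M, i ∉ CR a ℓ k e x → i ∉ CR a ℓ k e' x' := by
    intro i h hc
    have hb : i ∉ bCR a ℓ k e x := fun hb => h (hBR hb)
    have hm : i ∈ CR a ℓ k e' x' \ bCR a ℓ k e x := Finset.mem_sdiff.2 ⟨hc, hb⟩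
    rw [hCR'] at hm
    exact h (Finset.mem_sdiff.1 hm).1
  have hmemCR' : ∀ i : Fin M, i ∈ CR a ℓ k e x → i ∉ bCR a ℓ k e x → i ∈ CR a ℓ k e' x' := by
    intro i h hb
    have hm : i ∈ CR a ℓ k e x \ bCR a ℓ k e x := Finset.mem_sdiff.2 ⟨h, hb⟩
    rw [← hCR'] at hm
    exact (Finset.mem_sdiff.1 hm).1
  have hnotCR'' : ∀ i : Fin M, i ∉ CR a ℓ k e x → i ∉ CR a ℓ k e'' x'' := by
    intro i h hc
    have hb : i ∉ bCR a ℓ k e x := fun hb => h (hBR hb)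
    have hm : i ∈ CR a ℓ k e'' x'' \ bCR a ℓ k e x := Finset.mem_sdiff.2 ⟨hc, hb⟩
    rw [hCR''] at hm
    exact h (Finset.mem_sdiff.1 hm).1
  have hmemCR'' : ∀ i : Fin M, i ∈ CR a ℓ k e x → i ∉ bCR a ℓ k e x → i ∈ CR a ℓ k e'' x'' := by
    intro i h hb
    have hm : i ∈ CR a ℓ k e x \ bCR a ℓ k e x := Finset.mem_sdiff.2 ⟨h, hb⟩
    rw [← hCR''] at hm
    exact (Finset.mem_sdiff.1 hm).1
  -- min computations
  have hminL : ∀ (E X : ℝ × ℝ) (i : Fin M), i ∉ CR a ℓ k E X →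
      min (l1 (X - a i)) (l1 (E - a i) + ℓ / k) = l1 (X - a i) := by
    intro E X i h
    have h2 : ¬ (l1 (E - a i) + ℓ / k ≤ l1 (X - a i)) := fun hh => h ((hCRmem E X i).2 hh)
    exact min_eq_left (not_le.1 h2).le
  have hminR : ∀ (E X : ℝ × ℝ) (i : Fin M), i ∈ CR a ℓ k E X →
      min (l1 (X - a i)) (l1 (E - a i) + ℓ / k) = l1 (E - a i) + ℓ / k :=
    fun E X i h => min_eq_right ((hCRmem E X i).1 h)
  -- l1 computations
  have hlx'P : ∀ i : Fin M, x.1 < (a i).1 → l1 (x' - a i) = l1 (x - a i) + lam1 := by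
    intro i h
    rw [l1_sub', l1_sub', hx'1, hx'2, habs_le' (x.1 - lam1) ((a i).1) (by linarith),
      habs_le' x.1 ((a i).1) h.le]
    ring
  have hlx'M : ∀ i : Fin M, (a i).1 < x.1 → l1 (x' - a i) = l1 (x - a i) - lam1 := by
    intro i h
    have h2 := hc1 i h
    rw [l1_sub', l1_sub', hx'1, hx'2, habs_ge' (x.1 - lam1) ((a i).1) h2.le,
      habs_ge' x.1 ((a i).1) h.le]
    ring
  have hlx''P : ∀ i : Fin M, x.1 < (a i).1 → l1 (x'' - a i) = l1 (x - a i) - lam2 := by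
    intro i h
    have h2 := hc2 i h
    rw [l1_sub', l1_sub', hx''1, hx''2, habs_le' (x.1 + lam2) ((a i).1) (by linarith),
      habs_le' x.1 ((a i).1) h.le]
    ring
  have hlx''M : ∀ i : Fin M, (a i).1 < x.1 → l1 (x'' - a i) = l1 (x - a i) + lam2 := by
    intro i h
    rw [l1_sub', l1_sub', hx''1, hx''2, habs_ge' (x.1 + lam2) ((a i).1) (by linarith),
      habs_ge' x.1 ((a i).1) h.le]
    ring
  have hle'P : ∀ i : Fin M, e.2 < (a i).2 → l1 (e' - a i) = l1 (e - a i) + beta1 := by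
    intro i h
    rw [l1_sub', l1_sub', he'1, he'2, habs_le' (e.2 - beta1) ((a i).2) (by linarith),
      habs_le' e.2 ((a i).2) h.le]
    ring
  have hle'M : ∀ i : Fin M, (a i).2 < e.2 → l1 (e' - a i) = l1 (e - a i) - beta1 := by
    intro i h
    have h2 := (hsep i).1 h
    rw [l1_sub', l1_sub', he'1, he'2, habs_ge' (e.2 - beta1) ((a i).2) (by linarith),
      habs_ge' e.2 ((a i).2) h.le]
    ring
  have hle''P : ∀ i : Fin M, e.2 < (a i).2 → l1 (e'' - a i) = l1 (e - a i) - beta2 := by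
    intro i h
    have h2 := (hsep i).2 h
    rw [l1_sub', l1_sub', he''1, he''2, habs_le' (e.2 + beta2) ((a i).2) (by linarith),
      habs_le' e.2 ((a i).2) h.le]
    ring
  have hle''M : ∀ i : Fin M, (a i).2 < e.2 → l1 (e'' - a i) = l1 (e - a i) + beta2 := by
    intro i h
    rw [l1_sub', l1_sub', he''1, he''2, habs_ge' (e.2 + beta2) ((a i).2) (by linarith),
      habs_ge' e.2 ((a i).2) h.le]
    ring
  constructor
  · -- first perturbation
    simp only [fObj]
    rw [← Finset.sum_sub_distrib]
    set d1 : Fin M → ℝ := fun i =>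
      ω i * min (l1 (x' - a i)) (l1 (e' - a i) + ℓ / k)
        - ω i * min (l1 (x - a i)) (l1 (e - a i) + ℓ / k) with hd1
    have hvDP : ∀ i ∈ ((bCR a ℓ k e x) \ Q2 a x).filter (fun j => e.2 < (a j).2),
        d1 i = ω i * beta1 := by
      intro i hi
      simp only [Finset.mem_filter, Finset.mem_sdiff] at hi
      obtain ⟨⟨hiB, _⟩, ha2⟩ := hi
      have hBeq := (hBmem i).1 hiB
      have ha1 := hBx i hiB
      simp only [hd1]
      rw [hminR e x i (hBR hiB), hlx'P i ha1, hle'P i ha2, hBeq,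
        min_eq_right (by linarith)]
      ring
    have hvDM : ∀ i ∈ ((bCR a ℓ k e x) \ Q2 a x).filter (fun j => (a j).2 < e.2),
        d1 i = ω i * (-beta1) := by
      intro i hi
      simp only [Finset.mem_filter, Finset.mem_sdiff] at hi
      obtain ⟨⟨hiB, _⟩, ha2⟩ := hi
      have hBeq := (hBmem i).1 hiB
      have ha1 := hBx i hiB
      simp only [hd1]
      rw [hminR e x i (hBR hiB), hlx'P i ha1, hle'M i ha2, hBeq,
        min_eq_right (by linarith)]
      ring
    have hvP : ∀ i ∈ (riCR a ℓ k e x).filter (fun j => e.2 < (a j).2),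
        d1 i = ω i * beta1 := by
      intro i hi
      simp only [Finset.mem_filter, riCR, Finset.mem_sdiff] at hi
      obtain ⟨⟨hiR, hiB⟩, ha2⟩ := hi
      simp only [hd1]
      rw [hminR e x i hiR, hminR e' x' i (hmemCR' i hiR hiB), hle'P i ha2]
      ring
    have hvM : ∀ i ∈ (riCR a ℓ k e x).filter (fun j => (a j).2 < e.2),
        d1 i = ω i * (-beta1) := by
      intro i hi
      simp only [Finset.mem_filter, riCR, Finset.mem_sdiff] at hi
      obtain ⟨⟨hiR, hiB⟩, ha2⟩ := hi
      simp only [hd1]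
      rw [hminR e x i hiR, hminR e' x' i (hmemCR' i hiR hiB), hle'M i ha2]
      ring
    have hv1 : ∀ i ∈ Q1 a x \ CR a ℓ k e x, d1 i = ω i * lam1 := by
      intro i hi
      rw [Finset.mem_sdiff] at hi
      obtain ⟨hiQ, hiR⟩ := hi
      simp only [Q1, Finset.mem_filter] at hiQ
      have ha1 : x.1 < (a i).1 := lt_of_le_of_ne hiQ.2.1 ((hne i).1.symm)
      simp only [hd1]
      rw [hminL e x i hiR, hminL e' x' i (hnotCR' i hiR), hlx'P i ha1]
      ring
    have hv2 : ∀ i ∈ Q2 a x \ riCR a ℓ k e x, d1 i = ω i * (-lam1) := by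
      intro i hi
      rw [Finset.mem_sdiff] at hi
      obtain ⟨hiQ, hiRI⟩ := hi
      simp only [Q2, Finset.mem_filter] at hiQ
      have hiR : i ∉ CR a ℓ k e x := by
        intro hR
        by_cases hb : i ∈ bCR a ℓ k e x
        · exact hBQ2 i hb (by simp [Q2, hiQ.2.1, hiQ.2.2])
        · exact hiRI (Finset.mem_sdiff.2 ⟨hR, hb⟩)
      simp only [hd1]
      rw [hminL e x i hiR, hminL e' x' i (hnotCR' i hiR), hlx'M i hiQ.2.1]
      ring
    have hv3 : ∀ i ∈ Q3 a x, d1 i = ω i * (-lam1) := by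
      intro i hi
      simp only [Q3, Finset.mem_filter] at hi
      have hiR := hQ3R i hi.2.1 hi.2.2
      simp only [hd1]
      rw [hminL e x i hiR, hminL e' x' i (hnotCR' i hiR), hlx'M i hi.2.1]
      ring
    have hv4 : ∀ i ∈ Q4 a x \ CR a ℓ k e x, d1 i = ω i * lam1 := by
      intro i hi
      rw [Finset.mem_sdiff] at hi
      obtain ⟨hiQ, hiR⟩ := hi
      simp only [Q4, Finset.mem_filter] at hiQ
      have ha1 : x.1 < (a i).1 := lt_of_le_of_ne hiQ.2.1 ((hne i).1.symm)
      simp only [hd1]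
      rw [hminL e x i hiR, hminL e' x' i (hnotCR' i hiR), hlx'P i ha1]
      ring
    rw [sum_partition a ℓ k e x (fun i => (hne i).1) (fun i => (hne i).2) hBR hBQ2 hQ3R d1,
      Finset.sum_congr rfl hvDP, Finset.sum_congr rfl hvDM, Finset.sum_congr rfl hvP,
      Finset.sum_congr rfl hvM, Finset.sum_congr rfl hv1, Finset.sum_congr rfl hv2,
      Finset.sum_congr rfl hv3, Finset.sum_congr rfl hv4]
    simp only [← Finset.sum_mul]
    simp only [w1, w2, w3, w4, wP2, wM2, wDP2, wDM2]
    ring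
  · -- second perturbation
    simp only [fObj]
    rw [← Finset.sum_sub_distrib]
    set d2 : Fin M → ℝ := fun i =>
      ω i * min (l1 (x'' - a i)) (l1 (e'' - a i) + ℓ / k)
        - ω i * min (l1 (x - a i)) (l1 (e - a i) + ℓ / k) with hd2
    have hvDP : ∀ i ∈ ((bCR a ℓ k e x) \ Q2 a x).filter (fun j => e.2 < (a j).2),
        d2 i = ω i * (-lam2) := by
      intro i hi
      simp only [Finset.mem_filter, Finset.mem_sdiff] at hi
      obtain ⟨⟨hiB, _⟩, ha2⟩ := hi
      have hBeq := (hBmem i).1 hiB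
      have ha1 := hBx i hiB
      simp only [hd2]
      rw [hminR e x i (hBR hiB), hlx''P i ha1, hle''P i ha2, hBeq,
        min_eq_left (by linarith)]
      ring
    have hvDM : ∀ i ∈ ((bCR a ℓ k e x) \ Q2 a x).filter (fun j => (a j).2 < e.2),
        d2 i = ω i * (-lam2) := by
      intro i hi
      simp only [Finset.mem_filter, Finset.mem_sdiff] at hi
      obtain ⟨⟨hiB, _⟩, ha2⟩ := hi
      have hBeq := (hBmem i).1 hiB
      have ha1 := hBx i hiB
      simp only [hd2]
      rw [hminR e x i (hBR hiB), hlx''P i ha1, hle''M i ha2, hBeq,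
        min_eq_left (by linarith)]
      ring
    have hvP : ∀ i ∈ (riCR a ℓ k e x).filter (fun j => e.2 < (a j).2),
        d2 i = ω i * (-beta2) := by
      intro i hi
      simp only [Finset.mem_filter, riCR, Finset.mem_sdiff] at hi
      obtain ⟨⟨hiR, hiB⟩, ha2⟩ := hi
      simp only [hd2]
      rw [hminR e x i hiR, hminR e'' x'' i (hmemCR'' i hiR hiB), hle''P i ha2]
      ring
    have hvM : ∀ i ∈ (riCR a ℓ k e x).filter (fun j => (a j).2 < e.2),
        d2 i = ω i * beta2 := by
      intro i hi
      simp only [Finset.mem_filter, riCR, Finset.mem_sdiff] at hi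
      obtain ⟨⟨hiR, hiB⟩, ha2⟩ := hi
      simp only [hd2]
      rw [hminR e x i hiR, hminR e'' x'' i (hmemCR'' i hiR hiB), hle''M i ha2]
      ring
    have hv1 : ∀ i ∈ Q1 a x \ CR a ℓ k e x, d2 i = ω i * (-lam2) := by
      intro i hi
      rw [Finset.mem_sdiff] at hi
      obtain ⟨hiQ, hiR⟩ := hi
      simp only [Q1, Finset.mem_filter] at hiQ
      have ha1 : x.1 < (a i).1 := lt_of_le_of_ne hiQ.2.1 ((hne i).1.symm)
      simp only [hd2]
      rw [hminL e x i hiR, hminL e'' x'' i (hnotCR'' i hiR), hlx''P i ha1]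
      ring
    have hv2 : ∀ i ∈ Q2 a x \ riCR a ℓ k e x, d2 i = ω i * lam2 := by
      intro i hi
      rw [Finset.mem_sdiff] at hi
      obtain ⟨hiQ, hiRI⟩ := hi
      simp only [Q2, Finset.mem_filter] at hiQ
      have hiR : i ∉ CR a ℓ k e x := by
        intro hR
        by_cases hb : i ∈ bCR a ℓ k e x
        · exact hBQ2 i hb (by simp [Q2, hiQ.2.1, hiQ.2.2])
        · exact hiRI (Finset.mem_sdiff.2 ⟨hR, hb⟩)
      simp only [hd2]
      rw [hminL e x i hiR, hminL e'' x'' i (hnotCR'' i hiR), hlx''M i hiQ.2.1]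
      ring
    have hv3 : ∀ i ∈ Q3 a x, d2 i = ω i * lam2 := by
      intro i hi
      simp only [Q3, Finset.mem_filter] at hi
      have hiR := hQ3R i hi.2.1 hi.2.2
      simp only [hd2]
      rw [hminL e x i hiR, hminL e'' x'' i (hnotCR'' i hiR), hlx''M i hi.2.1]
      ring
    have hv4 : ∀ i ∈ Q4 a x \ CR a ℓ k e x, d2 i = ω i * (-lam2) := by
      intro i hi
      rw [Finset.mem_sdiff] at hi
      obtain ⟨hiQ, hiR⟩ := hi
      simp only [Q4, Finset.mem_filter] at hiQ
      have ha1 : x.1 < (a i).1 := lt_of_le_of_ne hiQ.2.1 ((hne i).1.symm)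
      simp only [hd2]
      rw [hminL e x i hiR, hminL e'' x'' i (hnotCR'' i hiR), hlx''P i ha1]
      ring
    rw [sum_partition a ℓ k e x (fun i => (hne i).1) (fun i => (hne i).2) hBR hBQ2 hQ3R d2,
      Finset.sum_congr rfl hvDP, Finset.sum_congr rfl hvDM, Finset.sum_congr rfl hvP,
      Finset.sum_congr rfl hvM, Finset.sum_congr rfl hv1, Finset.sum_congr rfl hv2,
      Finset.sum_congr rfl hv3, Finset.sum_congr rfl hv4]
    simp only [← Finset.sum_mul]
    simp only [w1, w2, w3, w4, wP2, wM2, wDP2, wDM2]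
    ring
end

section
/- Let e, x, a ∈ ℝ², c>0 and λ₁, β₁, λ₂, β₂ > 0 with λ₁ < β₁ and λ₂ ≤ β₂, and set x'=x+(−λ₁,0), e'=e+(0,−β₁), x''=x+(λ₂,0), e''=e+(0,β₂). If ‖x−a‖₁ = ‖e−a‖₁ + c, a₁ ≥ x₁ + λ₂ and a₂ ≥ e₂ + β₂, then ‖e'−a‖₁ + c > ‖x'−a‖₁ and ‖e''−a‖₁ + c ≤ ‖x''−a‖₁. -/
/-- When the vertical displacements dominate the horizontal ones (case θ'<θ<θ''≤π/4),
a boundary point of the captation region lying above the entrance and right of the exit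
leaves the captation region after the perturbation (x',e') and belongs to the captation
region after the perturbation (x'',e''). -/
theorem boundary_point_above_steep (e x a : ℝ × ℝ) (c : ℝ) (hc : 0 < c)
    (lam1 beta1 lam2 beta2 : ℝ)
    (hlam1 : 0 < lam1) (hbeta1 : 0 < beta1) (hlam2 : 0 < lam2) (hbeta2 : 0 < beta2)
    (h1 : lam1 < beta1) (h2 : lam2 ≤ beta2)
    (x' e' x'' e'' : ℝ × ℝ)
    (hx' : x' = x + (-lam1, 0)) (he' : e' = e + (0, -beta1))
    (hx'' : x'' = x + (lam2, 0)) (he'' : e'' = e + (0, beta2))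
    (hbd : l1 (x - a) = l1 (e - a) + c)
    (ha1 : x.1 + lam2 ≤ a.1) (ha2 : e.2 + beta2 ≤ a.2) :
    l1 (x' - a) < l1 (e' - a) + c ∧ l1 (e'' - a) + c ≤ l1 (x'' - a) := by
  subst hx' he' hx'' he''
  simp only [l1, Prod.fst_sub, Prod.snd_sub, Prod.fst_add, Prod.snd_add] at *
  have h3 : |x.1 + -lam1 - a.1| = a.1 - x.1 + lam1 := by
    rw [abs_of_nonpos (by linarith)]; ring
  have h4 : |e.2 + -beta1 - a.2| = a.2 - e.2 + beta1 := by
    rw [abs_of_nonpos (by linarith)]; ring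
  have h5 : |x.1 + lam2 - a.1| = a.1 - x.1 - lam2 := by
    rw [abs_of_nonpos (by linarith)]; ring
  have h6 : |e.2 + beta2 - a.2| = a.2 - e.2 - beta2 := by
    rw [abs_of_nonpos (by linarith)]; ring
  have h7 : |x.1 - a.1| = a.1 - x.1 := by rw [abs_of_nonpos (by linarith)]; ring
  have h8 : |e.2 - a.2| = a.2 - e.2 := by rw [abs_of_nonpos (by linarith)]; ring
  constructor <;> [skip; skip] <;>
    simp only [add_sub_cancel_right, add_zero, sub_zero, neg_add_eq_sub] at * <;>
    linarith
end
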